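/- arXiv:0901.3904 — 9 statements merged into one kernel-verified Lean document; each statement's English description precedes it below -/
import Mathlib

section
/- Let α, β : ℝ → ℝ³ be twice differentiable curves, fix u ∈ ℝ, and let c < d be real numbers. Then the identity ⟨(α'(u) + v·β'(u)) × β(u), α''(u) + v·β''(u)⟩ = ⟨(α'(u) + v·β'(u)) × β(u), e₃⟩ · (1 + 2v⟨α'(u), β'(u)⟩ + v²‖β'(u)‖²) holds for every v ∈ (c, d) if and only if the following four equations hold: (i) ⟨α'(u) × β(u), α''(u)⟩ = ⟨α'(u) × β(u), e₃⟩; (ii) ⟨α'(u) × β(u), β''(u)⟩ + ⟨β'(u) × β(u), α''(u)⟩ = ⟨β'(u) × β(u), e₃⟩ + 2⟨α'(u), β'(u)⟩·⟨α'(u) × β(u), e₃⟩; (iii) ⟨β'(u) × β(u), β''(u)⟩ = 2⟨α'(u), β'(u)⟩·⟨β'(u) × β(u), e₃⟩ + ‖β'(u)‖²·⟨α'(u) × β(u), e₃⟩; (iv) ‖β'(u)‖²·⟨β'(u) × β(u), e₃⟩ = 0. -/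
noncomputable section
open scoped RealInnerProductSpace

/-- ℝ³ with its standard inner product structure. -/
abbrev R3 : Type := EuclideanSpace ℝ (Fin 3)

/-- The cross product on ℝ³. -/
def cross (v w : R3) : R3 :=
  (WithLp.equiv 2 (Fin 3 → ℝ)).symm
    ![v 1 * w 2 - v 2 * w 1, v 2 * w 0 - v 0 * w 2, v 0 * w 1 - v 1 * w 0]

/-- The vector e₃ = (0,0,1). -/
def e3 : R3 := (WithLp.equiv 2 (Fin 3 → ℝ)).symm ![0, 0, 1]

/-! Both sides of the minimality identity are polynomials in `v`, so their difference is a cubic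
whose coefficients are, up to sign, the defects of the four equations (i)–(iv). A polynomial
vanishing on the infinite set `(c, d)` is zero. -/

lemma cross_add_smul_left (x y z : R3) (v : ℝ) :
    cross (x + v • y) z = cross x z + v • cross y z := by
  ext i
  fin_cases i <;> simp [cross] <;> ring

lemma forall_mem_cubic_eq_zero_iff {R : Type*} [CommRing R] [IsDomain R] {s : Set R}
    (hs : s.Infinite) {c₀ c₁ c₂ c₃ : R} :
    (∀ x ∈ s, c₀ + c₁ * x + c₂ * x ^ 2 + c₃ * x ^ 3 = 0) ↔
      c₀ = 0 ∧ c₁ = 0 ∧ c₂ = 0 ∧ c₃ = 0 := by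
  open Polynomial in
  refine ⟨fun h => ?_, by rintro ⟨rfl, rfl, rfl, rfl⟩ x _; ring⟩
  have hp : C c₀ + C c₁ * X + C c₂ * X ^ 2 + C c₃ * X ^ 3 = 0 :=
    eq_zero_of_infinite_isRoot _ <| hs.mono fun x hx => by simp [h x hx]
  have hcoeff (n : ℕ) := congrArg (coeff · n) hp
  simpa [coeff_X, coeff_X_pow] using
    (⟨hcoeff 0, hcoeff 1, hcoeff 2, hcoeff 3⟩ : _ ∧ _ ∧ _ ∧ _)

lemma inner_cross_add_smul_sub_eq_cubic (a b a' b' w n : R3) (v : ℝ) :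
    ⟪cross (a + v • b) w, a' + v • b'⟫ -
        ⟪cross (a + v • b) w, n⟫ * (1 + 2 * v * ⟪a, b⟫ + v ^ 2 * ‖b‖ ^ 2) =
      (⟪cross a w, a'⟫ - ⟪cross a w, n⟫) +
        (⟪cross a w, b'⟫ + ⟪cross b w, a'⟫ - ⟪cross b w, n⟫ - 2 * ⟪a, b⟫ * ⟪cross a w, n⟫) * v +
        (⟪cross b w, b'⟫ - 2 * ⟪a, b⟫ * ⟪cross b w, n⟫ - ‖b‖ ^ 2 * ⟪cross a w, n⟫) * v ^ 2 +
        -(‖b‖ ^ 2 * ⟪cross b w, n⟫) * v ^ 3 := by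
  simp only [cross_add_smul_left, inner_add_left, inner_add_right, real_inner_smul_left,
    real_inner_smul_right]
  ring

theorem ruled_minimality_iff_system_general
    (α β : ℝ → R3)
    (u : ℝ) (c d : ℝ) (hcd : c < d) :
    (∀ v ∈ Set.Ioo c d,
        ⟪cross (deriv α u + v • deriv β u) (β u),
            deriv (deriv α) u + v • deriv (deriv β) u⟫ =
          ⟪cross (deriv α u + v • deriv β u) (β u), e3⟫ *
            (1 + 2 * v * ⟪deriv α u, deriv β u⟫ + v ^ 2 * ‖deriv β u‖ ^ 2)) ↔
      (⟪cross (deriv α u) (β u), deriv (deriv α) u⟫ =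
          ⟪cross (deriv α u) (β u), e3⟫ ∧
        ⟪cross (deriv α u) (β u), deriv (deriv β) u⟫ +
            ⟪cross (deriv β u) (β u), deriv (deriv α) u⟫ =
          ⟪cross (deriv β u) (β u), e3⟫ +
            2 * ⟪deriv α u, deriv β u⟫ * ⟪cross (deriv α u) (β u), e3⟫ ∧
        ⟪cross (deriv β u) (β u), deriv (deriv β) u⟫ =
          2 * ⟪deriv α u, deriv β u⟫ * ⟪cross (deriv β u) (β u), e3⟫ +
            ‖deriv β u‖ ^ 2 * ⟪cross (deriv α u) (β u), e3⟫ ∧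
        ‖deriv β u‖ ^ 2 * ⟪cross (deriv β u) (β u), e3⟫ = 0) := by
  conv_lhs => enter [v, _]; rw [← sub_eq_zero, inner_cross_add_smul_sub_eq_cubic]
  rw [forall_mem_cubic_eq_zero_iff (Set.Ioo_infinite hcd)]
  constructor <;> rintro ⟨h₀, h₁, h₂, h₃⟩ <;>
    exact ⟨by linear_combination h₀, by linear_combination h₁, by linear_combination h₂,
      by linear_combination -h₃⟩

/-- Proposition 1: the minimality identity holds for all v ∈ (c,d) iff the four
coefficient equations of system (5) hold. -/
theorem ruled_minimality_iff_system
    (α β : ℝ → R3) (hα : ContDiff ℝ 2 α) (hβ : ContDiff ℝ 2 β)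
    (u : ℝ) (c d : ℝ) (hcd : c < d) :
    (∀ v ∈ Set.Ioo c d,
        ⟪cross (deriv α u + v • deriv β u) (β u),
            deriv (deriv α) u + v • deriv (deriv β) u⟫ =
          ⟪cross (deriv α u + v • deriv β u) (β u), e3⟫ *
            (1 + 2 * v * ⟪deriv α u, deriv β u⟫ + v ^ 2 * ‖deriv β u‖ ^ 2)) ↔
      (⟪cross (deriv α u) (β u), deriv (deriv α) u⟫ =
          ⟪cross (deriv α u) (β u), e3⟫ ∧
        ⟪cross (deriv α u) (β u), deriv (deriv β) u⟫ +
            ⟪cross (deriv β u) (β u), deriv (deriv α) u⟫ =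
          ⟪cross (deriv β u) (β u), e3⟫ +
            2 * ⟪deriv α u, deriv β u⟫ * ⟪cross (deriv α u) (β u), e3⟫ ∧
        ⟪cross (deriv β u) (β u), deriv (deriv β) u⟫ =
          2 * ⟪deriv α u, deriv β u⟫ * ⟪cross (deriv β u) (β u), e3⟫ +
            ‖deriv β u‖ ^ 2 * ⟪cross (deriv α u) (β u), e3⟫ ∧
        ‖deriv β u‖ ^ 2 * ⟪cross (deriv β u) (β u), e3⟫ = 0) :=
  ruled_minimality_iff_system_general α β u c d hcd
end
end

section
/- Let β : (a, b) → ℝ³ be a twice differentiable curve with ‖β(u)‖ = 1 and β'(u) ≠ 0 for every u ∈ (a, b), and suppose that ⟨β'(u) × β(u), e₃⟩ = 0 (equivalently β'₁(u)β₂(u) − β'₂(u)β₁(u) = 0) for every u ∈ (a, b). Then β takes its values in a plane containing the z-axis: there exists a nonzero vector w ∈ ℝ³ with ⟨w, e₃⟩ = 0 such that ⟨β(u), w⟩ = 0 for all u ∈ (a, b). -/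
noncomputable section
open scoped RealInnerProductSpace

/-!
The horizontal part `γ = (β 0, β 1)` of `β` has zero Wronskian. Where `γ ≠ 0`, the ratio of the
components of `γ` in a frame adapted to `γ` has zero derivative, so `γ` stays on a line through the
origin. Where `γ = 0`, `β` is at a pole of the unit sphere, so `β'` is horizontal and `γ` has a
simple zero there: on either side `γ` is a multiple of a fixed vector, and comparing one-sided
derivatives shows that both lines are the tangent line of `γ`. Zeros of `γ` are thus isolated, and
the local lines glue along the connected interval.
-/

open Filter Set Topology

section Wronskian

variable {𝕜 : Type*} [RCLike 𝕜] {f g f' g' : 𝕜 → 𝕜} {s : Set 𝕜} {u : 𝕜}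

theorem exists_eq_const_mul_of_wronskian_eq_zero (hs : IsOpen s) (hs' : IsPreconnected s)
    (hf : ∀ t ∈ s, HasDerivAt f (f' t) t) (hg : ∀ t ∈ s, HasDerivAt g (g' t) t)
    (hW : ∀ t ∈ s, f' t * g t = g' t * f t) (hg0 : ∀ t ∈ s, g t ≠ 0) :
    ∃ k, ∀ t ∈ s, f t = k * g t := by
  have hratio : ∀ t ∈ s, HasDerivAt (fun t => f t / g t) 0 t := fun t ht => by
    refine ((hf t ht).div (hg t ht) (hg0 t ht)).congr_deriv ?_
    rw [hW t ht]
    ring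
  obtain ⟨k, hk⟩ := hs.exists_is_const_of_deriv_eq_zero hs'
    (fun t ht => (hratio t ht).differentiableAt.differentiableWithinAt)
    (fun t ht => (hratio t ht).deriv)
  exact ⟨k, fun t ht => by rw [← hk t ht, div_mul_cancel₀ _ (hg0 t ht)]⟩

theorem eventuallyEq_zero_of_wronskian_eq_zero_of_ne_zero
    (hf : ∀ᶠ t in 𝓝 u, HasDerivAt f (f' t) t) (hg : ∀ᶠ t in 𝓝 u, HasDerivAt g (g' t) t)
    (hW : ∀ᶠ t in 𝓝 u, f' t * g t = g' t * f t) (hfu : f u = 0) (hgu : g u ≠ 0) :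
    f =ᶠ[𝓝 u] 0 := by
  have hg0 : ∀ᶠ t in 𝓝 u, g t ≠ 0 := hg.self_of_nhds.continuousAt.eventually_ne hgu
  obtain ⟨ε, hε, hball⟩ := Metric.eventually_nhds_iff_ball.1 (hf.and (hg.and (hW.and hg0)))
  obtain ⟨k, hk⟩ := exists_eq_const_mul_of_wronskian_eq_zero Metric.isOpen_ball
    (convex_ball u ε).isPreconnected (fun t ht => (hball t ht).1) (fun t ht => (hball t ht).2.1)
    (fun t ht => (hball t ht).2.2.1) (fun t ht => (hball t ht).2.2.2)
  have hk0 : k = 0 := by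
    simpa [hfu, hgu, eq_comm] using hk u (Metric.mem_ball_self hε)
  filter_upwards [Metric.ball_mem_nhds u hε] with t ht
  simp [hk t ht, hk0]

end Wronskian

theorem eventuallyEq_zero_of_wronskian_eq_zero_of_hasDerivAt_ne_zero {f g f' g' : ℝ → ℝ} {u : ℝ}
    (hf : ∀ᶠ t in 𝓝 u, HasDerivAt f (f' t) t) (hg : ∀ᶠ t in 𝓝 u, HasDerivAt g (g' t) t)
    (hW : ∀ᶠ t in 𝓝 u, f' t * g t = g' t * f t) (hfu : f u = 0) (hgu : g u = 0)
    (hf'u : f' u = 0) (hg'u : g' u ≠ 0) :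
    f =ᶠ[𝓝 u] 0 := by
  have hg0 : ∀ᶠ t in 𝓝 u, t ≠ u → g t ≠ 0 :=
    eventually_nhdsWithin_iff.1 (hg.self_of_nhds.eventually_ne hg'u)
  obtain ⟨ε, hε, hball⟩ := Metric.eventually_nhds_iff_ball.1 (hf.and (hg.and (hW.and hg0)))
  -- On either side of `u`, `f = k * g` for a constant `k`; comparing derivatives at `u` gives `k = 0`.
  have side : ∀ S J : Set ℝ, UniqueDiffWithinAt ℝ S u → J ∈ 𝓝[S] u → IsOpen J →
      IsPreconnected J → J ⊆ Metric.ball u ε \ {u} → f =ᶠ[𝓝[S] u] 0 := by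
    intro S J hS hJS hJ hJ' hJball
    obtain ⟨k, hk⟩ := exists_eq_const_mul_of_wronskian_eq_zero hJ hJ'
      (fun t ht => (hball t (hJball ht).1).1) (fun t ht => (hball t (hJball ht).1).2.1)
      (fun t ht => (hball t (hJball ht).1).2.2.1)
      (fun t ht => (hball t (hJball ht).1).2.2.2 (hJball ht).2)
    have hfk : HasDerivWithinAt f (k * g' u) S u :=
      (hg.self_of_nhds.const_mul k).hasDerivWithinAt.congr_of_eventuallyEq
        (eventually_of_mem hJS hk) (by simp [hfu, hgu])
    have hk0 : k = 0 := by
      simpa [hf'u, hg'u] using hS.eq_deriv _ hfk hf.self_of_nhds.hasDerivWithinAt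
    filter_upwards [hJS] with t ht
    simp [hk t ht, hk0]
  have hlt := side (Iio u) (Ioo (u - ε) u) (uniqueDiffWithinAt_Iio u)
    (Ioo_mem_nhdsLT (by linarith)) isOpen_Ioo isPreconnected_Ioo fun t ht =>
      ⟨by rw [Real.ball_eq_Ioo]; exact ⟨ht.1, by linarith [ht.2]⟩, ht.2.ne⟩
  have hgt := side (Ioi u) (Ioo u (u + ε)) (uniqueDiffWithinAt_Ioi u)
    (Ioo_mem_nhdsGT (by linarith)) isOpen_Ioo isPreconnected_Ioo fun t ht =>
      ⟨by rw [Real.ball_eq_Ioo]; exact ⟨by linarith [ht.1], ht.2⟩, ht.1.ne'⟩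
  rw [EventuallyEq, ← nhdsNE_sup_pure, ← nhdsLT_sup_nhdsGT, eventually_sup, eventually_sup,
    eventually_pure]
  exact ⟨⟨hlt, hgt⟩, hfu⟩

theorem mul_eq_mul_trans {R : Type*} [CommRing R] [IsDomain R] {a₁ a₂ b₁ b₂ c₁ c₂ : R}
    (hb : b₁ ≠ 0 ∨ b₂ ≠ 0) (hab : a₁ * b₂ = a₂ * b₁) (hbc : b₁ * c₂ = b₂ * c₁) :
    a₁ * c₂ = a₂ * c₁ := by
  rcases hb with hb | hb
  · exact mul_left_cancel₀ hb (by linear_combination a₁ * hbc + c₁ * hab)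
  · exact mul_left_cancel₀ hb (by linear_combination a₂ * hbc + c₂ * hab)

section PlaneCurve

variable {x y x' y' : ℝ → ℝ} {s : Set ℝ} {u : ℝ}

theorem exists_eventually_collinear (hx : ∀ᶠ t in 𝓝 u, HasDerivAt x (x' t) t)
    (hy : ∀ᶠ t in 𝓝 u, HasDerivAt y (y' t) t) (hW : ∀ᶠ t in 𝓝 u, x' t * y t = y' t * x t)
    (hnd : x u = 0 → y u = 0 → x' u ≠ 0 ∨ y' u ≠ 0) :
    ∃ c d : ℝ, (c ≠ 0 ∨ d ≠ 0) ∧ ∀ᶠ t in 𝓝 u, c * y t = d * x t := by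
  -- In the frame `(c, d), (-d, c)` the components of `(x, y)` still have zero Wronskian.
  have frame : ∀ c d : ℝ,
      (∀ᶠ t in 𝓝 u, HasDerivAt (fun t => c * y t - d * x t) (c * y' t - d * x' t) t) ∧
      (∀ᶠ t in 𝓝 u, HasDerivAt (fun t => c * x t + d * y t) (c * x' t + d * y' t) t) ∧
      ∀ᶠ t in 𝓝 u, (c * y' t - d * x' t) * (c * x t + d * y t) =
        (c * x' t + d * y' t) * (c * y t - d * x t) := fun c d =>
    ⟨(hx.and hy).mono fun t h => (h.2.const_mul c).sub (h.1.const_mul d),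
     (hx.and hy).mono fun t h => (h.1.const_mul c).add (h.2.const_mul d),
     hW.mono fun t h => by linear_combination (-(c * c) - d * d) * h⟩
  have collinear : ∀ c d : ℝ, (fun t => c * y t - d * x t) =ᶠ[𝓝 u] 0 →
      ∀ᶠ t in 𝓝 u, c * y t = d * x t := fun c d h =>
    h.mono fun t ht => sub_eq_zero.1 ht
  by_cases h0 : x u = 0 ∧ y u = 0
  · have hd : x' u ≠ 0 ∨ y' u ≠ 0 := hnd h0.1 h0.2
    obtain ⟨hf, hg, hfg⟩ := frame (x' u) (y' u)
    refine ⟨x' u, y' u, hd, collinear _ _ ?_⟩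
    refine eventuallyEq_zero_of_wronskian_eq_zero_of_hasDerivAt_ne_zero hf hg hfg
      (by simp [h0.1, h0.2]) (by simp [h0.1, h0.2]) (by ring) ?_
    rwa [Ne, mul_self_add_mul_self_eq_zero, not_and_or]
  · obtain ⟨hf, hg, hfg⟩ := frame (x u) (y u)
    refine ⟨x u, y u, not_and_or.1 h0, collinear _ _ ?_⟩
    refine eventuallyEq_zero_of_wronskian_eq_zero_of_ne_zero hf hg hfg (by ring) ?_
    rwa [Ne, mul_self_add_mul_self_eq_zero]

theorem frequently_ne_zero_or_ne_zero (hx : HasDerivAt x (x' u) u) (hy : HasDerivAt y (y' u) u)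
    (hnd : x u = 0 → y u = 0 → x' u ≠ 0 ∨ y' u ≠ 0) :
    ∃ᶠ t in 𝓝 u, x t ≠ 0 ∨ y t ≠ 0 := by
  by_cases h0 : x u = 0 ∧ y u = 0
  · refine Frequently.filter_mono ?_ (nhdsWithin_le_nhds (s := {u}ᶜ))
    rcases hnd h0.1 h0.2 with hx' | hy'
    · exact ((hx.eventually_ne hx').mono fun t ht => Or.inl ht).frequently
    · exact ((hy.eventually_ne hy').mono fun t ht => Or.inr ht).frequently
  · exact frequently_nhds_iff.2 fun U hU _ => ⟨u, hU, not_and_or.1 h0⟩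

theorem exists_collinear_of_wronskian_eq_zero (hs : IsOpen s) (hs' : IsPreconnected s)
    (hx : ∀ t ∈ s, HasDerivAt x (x' t) t) (hy : ∀ t ∈ s, HasDerivAt y (y' t) t)
    (hW : ∀ t ∈ s, x' t * y t = y' t * x t)
    (hnd : ∀ t ∈ s, x t = 0 → y t = 0 → x' t ≠ 0 ∨ y' t ≠ 0) :
    ∃ c d : ℝ, (c ≠ 0 ∨ d ≠ 0) ∧ ∀ t ∈ s, c * y t = d * x t := by
  have hloc : ∀ u ∈ s, ∃ c d : ℝ, (c ≠ 0 ∨ d ≠ 0) ∧ ∀ᶠ t in 𝓝 u, c * y t = d * x t :=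
    fun u hu => exists_eventually_collinear (eventually_of_mem (hs.mem_nhds hu) hx)
      (eventually_of_mem (hs.mem_nhds hu) hy) (eventually_of_mem (hs.mem_nhds hu) hW) (hnd u hu)
  have hfreq : ∀ u ∈ s, ∃ᶠ t in 𝓝 u, x t ≠ 0 ∨ y t ≠ 0 :=
    fun u hu => frequently_ne_zero_or_ne_zero (hx u hu) (hy u hu) (hnd u hu)
  rcases s.eq_empty_or_nonempty with rfl | ⟨u, hu⟩
  · exact ⟨1, 0, by simp, by simp⟩
  obtain ⟨p, hp0, hp⟩ := ((hfreq u hu).and_eventually (hs.mem_nhds hu)).exists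
  set U := {t | ∀ᶠ r in 𝓝 t, x p * y r = y p * x r}
  have hpU : p ∈ U := by
    obtain ⟨c, d, hcd, hV⟩ := hloc p hp
    filter_upwards [hV] with r hr
    exact mul_eq_mul_trans hcd (by linear_combination -hV.self_of_nhds) hr
  -- Near a point of `closure U ∩ s`, `(x, y)` is parallel to some `(c, d)`; a point of `U` close
  -- by where `(x, y) ≠ 0` shows that `(c, d)` is parallel to `(x p, y p)`.
  have hclosed : closure U ∩ s ⊆ U := by
    rintro t ⟨htU, ht⟩
    obtain ⟨c, d, hcd, hV⟩ := hloc t ht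
    obtain ⟨t', ht'U, ht'V⟩ :=
      ((mem_closure_iff_frequently.1 htU).and_eventually
        (hV.and (hs.mem_nhds ht)).eventually_nhds).exists
    obtain ⟨r, hr0, hrU, hrV⟩ :=
      ((hfreq t' ht'V.self_of_nhds.2).and_eventually (ht'U.and ht'V)).exists
    filter_upwards [hV] with q hq
    refine mul_eq_mul_trans hr0 hrU (mul_eq_mul_trans hcd ?_ hq)
    linear_combination -hrV.1
  refine ⟨x p, y p, hp0, fun t ht => ?_⟩
  exact (hs'.subset_of_closure_inter_subset isOpen_setOfPred_eventually_nhds ⟨p, hp, hpU⟩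
    hclosed ht).self_of_nhds

end PlaneCurve

theorem inner_eq_zero_of_hasDerivAt_of_norm_eq {F : Type*} [NormedAddCommGroup F]
    [InnerProductSpace ℝ F] {f : ℝ → F} {f' : F} {u r : ℝ} (hf : HasDerivAt f f' u)
    (hr : ∀ᶠ t in 𝓝 u, ‖f t‖ = r) :
    ⟪f u, f'⟫ = 0 := by
  have hconst : HasDerivAt (‖f ·‖ ^ 2) 0 u :=
    (hasDerivAt_const u (r ^ 2)).congr_of_eventuallyEq (hr.mono fun t ht => by simp [ht])
  simpa using hf.norm_sq.unique hconst

theorem real_inner_R3 (v w : R3) : ⟪v, w⟫ = v 0 * w 0 + v 1 * w 1 + v 2 * w 2 := by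
  simp [PiLp.inner_apply, Fin.sum_univ_three, mul_comm]

theorem inner_cross_e3 (v w : R3) : ⟪cross v w, e3⟫ = v 0 * w 1 - v 1 * w 0 := by
  simp [real_inner_R3, cross, e3]

theorem apply_zero_ne_zero_or_apply_one_ne_zero_of_hasDerivAt {β : ℝ → R3} {β' : R3} {u : ℝ}
    (hβ : HasDerivAt β β' u) (hunit : ∀ᶠ t in 𝓝 u, ‖β t‖ = 1) (hβ' : β' ≠ 0)
    (h0 : β u 0 = 0) (h1 : β u 1 = 0) :
    β' 0 ≠ 0 ∨ β' 1 ≠ 0 := by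
  have htangent := inner_eq_zero_of_hasDerivAt_of_norm_eq hβ hunit
  have hpole : ⟪β u, β u⟫ = 1 := by
    rw [real_inner_self_eq_norm_sq, hunit.self_of_nhds, one_pow]
  rw [real_inner_R3, h0, h1] at htangent hpole
  have h2 : β' 2 = 0 := by
    have : β u 2 ≠ 0 := by rintro h; simp [h] at hpole
    simpa [this] using htangent
  by_contra! h
  exact hβ' (by ext i; fin_cases i <;> simp [h.1, h.2, h2])

/-- Key step of Proposition 2: the director curve lies in a plane containing the
z-axis. -/
theorem director_in_plane_through_z_axis
    (a b : ℝ) (β : ℝ → R3)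
    (hβ : ∀ u ∈ Set.Ioo a b, ContDiffAt ℝ 2 β u)
    (hunit : ∀ u ∈ Set.Ioo a b, ‖β u‖ = 1)
    (hne : ∀ u ∈ Set.Ioo a b, deriv β u ≠ 0)
    (hhor : ∀ u ∈ Set.Ioo a b, ⟪cross (deriv β u) (β u), e3⟫ = 0) :
    ∃ w : R3, w ≠ 0 ∧ ⟪w, e3⟫ = 0 ∧ ∀ u ∈ Set.Ioo a b, ⟪β u, w⟫ = 0 := by
  have hderiv : ∀ u ∈ Ioo a b, HasDerivAt β (deriv β u) u := fun u hu =>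
    ((hβ u hu).differentiableAt (by norm_num)).hasDerivAt
  have hcoord : ∀ i, ∀ u ∈ Ioo a b, HasDerivAt (fun t => β t i) (deriv β u i) u :=
    fun i u hu => (EuclideanSpace.proj i : R3 →L[ℝ] ℝ).hasFDerivAt.comp_hasDerivAt u (hderiv u hu)
  obtain ⟨c, d, hcd, hline⟩ := exists_collinear_of_wronskian_eq_zero isOpen_Ioo
    isPreconnected_Ioo (hcoord 0) (hcoord 1)
    (fun u hu => sub_eq_zero.1 (by rw [← inner_cross_e3]; exact hhor u hu))
    (fun u hu => apply_zero_ne_zero_or_apply_one_ne_zero_of_hasDerivAt (hderiv u hu)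
      (eventually_of_mem (isOpen_Ioo.mem_nhds hu) hunit) (hne u hu))
  refine ⟨!₂[-d, c, 0], ?_, by simp [real_inner_R3, e3], fun u hu => ?_⟩
  · simpa [Matrix.cons_eq_zero_iff, imp_iff_not_or, or_comm] using hcd
  · simp only [real_inner_R3, Matrix.cons_val_zero, Matrix.cons_val_one, Matrix.cons_val]
    linear_combination hline u hu
end
end

section
/- Let α, β : (a, b) → ℝ³ be twice differentiable with ‖α'(u)‖ = 1, ‖β(u)‖ = 1, ⟨α'(u), β(u)⟩ = 0, and β'(u) ≠ 0 for all u ∈ (a, b). Suppose that for every u ∈ (a, b) the four equations hold: (i) ⟨α'(u) × β(u), α''(u)⟩ = ⟨α'(u) × β(u), e₃⟩; (ii) ⟨α'(u) × β(u), β''(u)⟩ + ⟨β'(u) × β(u), α''(u)⟩ = ⟨β'(u) × β(u), e₃⟩ + 2⟨α'(u), β'(u)⟩·⟨α'(u) × β(u), e₃⟩; (iii) ⟨β'(u) × β(u), β''(u)⟩ = 2⟨α'(u), β'(u)⟩·⟨β'(u) × β(u), e₃⟩ + ‖β'(u)‖²·⟨α'(u) × β(u), e₃⟩; (iv) ‖β'(u)‖²·⟨β'(u)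 × β(u), e₃⟩ = 0. Then the ruled surface X(u, v) = α(u) + v·β(u) is contained in a plane parallel to the z-axis: there exist a nonzero vector w ∈ ℝ³ with ⟨w, e₃⟩ = 0 and a constant k ∈ ℝ such that ⟨α(u), w⟩ = k and ⟨β(u), w⟩ = 0 for all u ∈ (a, b). -/
noncomputable section
open scoped RealInnerProductSpace

/-
Along the directrix take the orthonormal frame `T = α'`, `β`, `N = α' × β`, and write
`p = ⟪T, β'⟫`, `q = ⟪N, β'⟫` and `t, b, n` for the `e₃`-components of `T, β, N`. Equations
(i)–(iv) turn the frame equations into `N' = -n T - q β`, `q' = 0`, `q p' = 0`,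
`t' = n² - p b`, `n' = -n t - q b`, and (iv), with `β' ≠ 0`, gives `p n = q t`.
If the constant `q` were nonzero, `p` would be constant as well, and differentiating `p n = q t`
gives `(p² + q²) n² = 0`; then `n = t = 0`, and `n' = 0` forces `b = 0`, contradicting
`t² + b² + n² = 1`. Hence `q = 0` and `n = 0`, so `N` is a constant horizontal unit vector,
orthogonal to `β`, with `⟪α, N⟫' = ⟪T, N⟫ = 0`.
-/

namespace R3

lemma inner_eq (x y : R3) : ⟪x, y⟫ = x 0 * y 0 + x 1 * y 1 + x 2 * y 2 := by
  simp [PiLp.inner_apply, Fin.sum_univ_three]; ring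

lemma isBilinearMap_cross : IsBilinearMap ℝ cross where
  add_left u v w := by ext i; fin_cases i <;> simp [cross] <;> ring
  smul_left c u v := by ext i; fin_cases i <;> simp [cross] <;> ring
  add_right u v w := by ext i; fin_cases i <;> simp [cross] <;> ring
  smul_right c u v := by ext i; fin_cases i <;> simp [cross] <;> ring

lemma cross_self (v : R3) : cross v v = 0 := by
  ext i; fin_cases i <;> simp [cross] <;> ring

lemma inner_self_cross (v w : R3) : ⟪v, cross v w⟫ = 0 := by
  rw [inner_eq]; simp [cross]; ring

lemma inner_cross_self (v w : R3) : ⟪w, cross v w⟫ = 0 := by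
  rw [inner_eq]; simp [cross]; ring

lemma norm_cross_sq (v w : R3) : ‖cross v w‖ ^ 2 = ‖v‖ ^ 2 * ‖w‖ ^ 2 - ⟪v, w⟫ ^ 2 := by
  simp only [← real_inner_self_eq_norm_sq, inner_eq]; simp [cross]; ring

lemma cross_cross_eq_smul_sub_smul (u v w : R3) :
    cross (cross u v) w = ⟪u, w⟫ • v - ⟪v, w⟫ • u := by
  ext i; fin_cases i <;> simp [cross, inner_eq] <;> ring

lemma cross_cross_eq_smul_sub_smul' (u v w : R3) :
    cross u (cross v w) = ⟪u, w⟫ • v - ⟪u, v⟫ • w := by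
  ext i; fin_cases i <;> simp [cross, inner_eq] <;> ring

lemma norm_e3 : ‖e3‖ = 1 := by
  simp [e3, EuclideanSpace.norm_eq, Fin.sum_univ_three]

theorem _root_.HasDerivAt.cross {f g : ℝ → R3} {f' g' : R3} {u : ℝ} (hf : HasDerivAt f f' u)
    (hg : HasDerivAt g g' u) :
    HasDerivAt (fun t => cross (f t) (g t)) (cross (f u) g' + cross f' (g u)) u :=
  isBilinearMap_cross.toContinuousBilinearMap.hasDerivAt_of_bilinear (fun _ => hf) (fun _ => hg)

section Frame

variable {T B : R3}

lemma norm_cross_of_orthonormal (hT : ‖T‖ = 1) (hB : ‖B‖ = 1) (hTB : ⟪T, B⟫ = 0) :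
    ‖cross T B‖ = 1 := by
  rw [← pow_eq_one_iff_of_nonneg (norm_nonneg _) two_ne_zero, norm_cross_sq, hT, hB, hTB]
  norm_num

lemma orthonormal_frame (hT : ‖T‖ = 1) (hB : ‖B‖ = 1) (hTB : ⟪T, B⟫ = 0) :
    Orthonormal ℝ ![T, B, cross T B] := by
  have hN := norm_cross_of_orthonormal hT hB hTB
  have hTN := inner_self_cross T B
  have hBN := inner_cross_self T B
  rw [orthonormal_iff_ite]
  intro i j
  fin_cases i <;> fin_cases j <;>
    simp [hT, hB, hN, hTB, hTN, hBN, real_inner_comm T B, real_inner_comm T (cross T B),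
      real_inner_comm B (cross T B)]

def frameBasis (hT : ‖T‖ = 1) (hB : ‖B‖ = 1) (hTB : ⟪T, B⟫ = 0) :
    OrthonormalBasis (Fin 3) ℝ R3 :=
  (basisOfOrthonormalOfCardEqFinrank (orthonormal_frame hT hB hTB) (by simp)).toOrthonormalBasis
    (by rw [coe_basisOfOrthonormalOfCardEqFinrank]; exact orthonormal_frame hT hB hTB)

lemma coe_frameBasis (hT : ‖T‖ = 1) (hB : ‖B‖ = 1) (hTB : ⟪T, B⟫ = 0) :
    ⇑(frameBasis hT hB hTB) = ![T, B, cross T B] := by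
  rw [frameBasis, Module.Basis.coe_toOrthonormalBasis, coe_basisOfOrthonormalOfCardEqFinrank]

lemma frame_sum_smul (hT : ‖T‖ = 1) (hB : ‖B‖ = 1) (hTB : ⟪T, B⟫ = 0) (x : R3) :
    ⟪T, x⟫ • T + ⟪B, x⟫ • B + ⟪cross T B, x⟫ • cross T B = x := by
  simpa [Fin.sum_univ_three, coe_frameBasis hT hB hTB, add_assoc]
    using (frameBasis hT hB hTB).sum_repr' x

lemma frame_sum_sq (hT : ‖T‖ = 1) (hB : ‖B‖ = 1) (hTB : ⟪T, B⟫ = 0) (x : R3) :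
    ⟪T, x⟫ ^ 2 + ⟪B, x⟫ ^ 2 + ⟪cross T B, x⟫ ^ 2 = ‖x‖ ^ 2 := by
  simpa [Fin.sum_univ_three, coe_frameBasis hT hB hTB, add_assoc]
    using (frameBasis hT hB hTB).sum_sq_inner_right x

lemma cross_cross_left_eq_neg (hT : ‖T‖ = 1) (hTB : ⟪T, B⟫ = 0) :
    cross T (cross T B) = -B := by
  simp [cross_cross_eq_smul_sub_smul', hTB, hT]

lemma cross_cross_right_eq_neg (hB : ‖B‖ = 1) (hTB : ⟪T, B⟫ = 0) :
    cross (cross T B) B = -T := by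
  simp [cross_cross_eq_smul_sub_smul, hTB, hB]

end Frame

end R3

open Filter Topology

lemma IsOpen.eq_of_hasDerivAt_eq_zero {𝕜 G : Type*} [RCLike 𝕜] [NormedAddCommGroup G]
    [NormedSpace 𝕜 G] {s : Set 𝕜} (hs : IsOpen s) (hs' : IsPreconnected s) {f : 𝕜 → G}
    (hf : ∀ x ∈ s, HasDerivAt f 0 x) {x y : 𝕜} (hx : x ∈ s) (hy : y ∈ s) : f x = f y :=
  hs.is_const_of_deriv_eq_zero hs' (fun z hz => (hf z hz).differentiableAt.differentiableWithinAt)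
    (fun z hz => (hf z hz).deriv) hx hy

section Calculus

variable {𝕜 F : Type*} [NontriviallyNormedField 𝕜] [NormedAddCommGroup F] [NormedSpace 𝕜 F]

lemma HasDerivAt.eq_zero_of_eventuallyEq_const {f : 𝕜 → F} {f' c : F} {x : 𝕜}
    (hf : HasDerivAt f f' x) (h : f =ᶠ[𝓝 x] fun _ => c) : f' = 0 :=
  hf.unique ((hasDerivAt_const x c).congr_of_eventuallyEq h)

lemma ContDiffAt.hasDerivAt_deriv {f : 𝕜 → F} {x : 𝕜} (hf : ContDiffAt 𝕜 2 f x) :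
    HasDerivAt (deriv f) (deriv (deriv f) x) x :=
  ((hf.derivWithin (m := 1) (by norm_num)).differentiableAt one_ne_zero).hasDerivAt

variable {E : Type*} [NormedAddCommGroup E] [InnerProductSpace ℝ E]

lemma HasDerivAt.inner_add_inner_eq_zero {f g : ℝ → E} {f' g' : E} {x c : ℝ}
    (hf : HasDerivAt f f' x) (hg : HasDerivAt g g' x) (h : ∀ᶠ y in 𝓝 x, ⟪f y, g y⟫ = c) :
    ⟪f x, g'⟫ + ⟪f', g x⟫ = 0 :=
  (hf.inner ℝ hg).eq_zero_of_eventuallyEq_const h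

lemma HasDerivAt.inner_eq_zero_of_norm {f : ℝ → E} {f' : E} {x c : ℝ}
    (hf : HasDerivAt f f' x) (h : ∀ᶠ y in 𝓝 x, ‖f y‖ = c) : ⟪f x, f'⟫ = 0 := by
  have := hf.inner_add_inner_eq_zero hf (c := c ^ 2)
    (h.mono fun y hy => by rw [real_inner_self_eq_norm_sq, hy])
  rw [real_inner_comm f'] at this ⊢
  linarith

lemma HasDerivAt.inner_const {f : ℝ → E} {f' : E} {x : ℝ} (hf : HasDerivAt f f' x) (v : E) :
    HasDerivAt (fun t => ⟪f t, v⟫) ⟪f', v⟫ x := by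
  simpa using hf.inner ℝ (hasDerivAt_const x v)

end Calculus

theorem eq_zero_of_frame_equations {s : Set ℝ} (hs : IsOpen s) (hs' : IsPreconnected s)
    {p p' q t b n : ℝ → ℝ} (hq : ∀ u ∈ s, HasDerivAt q 0 u)
    (hp : ∀ u ∈ s, HasDerivAt p (p' u) u) (hqp : ∀ u ∈ s, q u * p' u = 0)
    (ht : ∀ u ∈ s, HasDerivAt t (n u ^ 2 - p u * b u) u)
    (hn : ∀ u ∈ s, HasDerivAt n (-(n u * t u) - q u * b u) u)
    (hpn : ∀ u ∈ s, p u * n u = q u * t u)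
    (hsum : ∀ u ∈ s, t u ^ 2 + b u ^ 2 + n u ^ 2 = 1)
    (hpq : ∀ u ∈ s, p u ^ 2 + q u ^ 2 ≠ 0) :
    ∀ u ∈ s, q u = 0 ∧ n u = 0 := by
  intro u hu
  have hq_const : ∀ x ∈ s, q x = q u := fun x hx => hs.eq_of_hasDerivAt_eq_zero hs' hq hx hu
  suffices hq0 : q u = 0 by
    have hp0 : p u ≠ 0 := by simpa [hq0] using hpq u hu
    refine ⟨hq0, (mul_eq_zero.1 ?_).resolve_left hp0⟩
    rw [hpn u hu, hq0, zero_mul]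
  by_contra hq0
  have hn0 : ∀ x ∈ s, n x = 0 := by
    intro x hx
    have hqx : q x ≠ 0 := hq_const x hx ▸ hq0
    have hp' : p' x = 0 := (mul_eq_zero.1 (hqp x hx)).resolve_left hqx
    have hg := ((hp x hx).mul (hn x hx)).sub ((hq x hx).mul (ht x hx))
    have hD := hg.eq_zero_of_eventuallyEq_const (c := 0)
      (eventually_of_mem (hs.mem_nhds hx) fun y hy => sub_eq_zero.2 (hpn y hy))
    have : (p x ^ 2 + q x ^ 2) * n x ^ 2 = 0 := by
      linear_combination (-q x) * hD + (p x * n x) * hpn x hx + (q x * n x) * hp'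
    exact pow_eq_zero_iff two_ne_zero |>.1 <| (mul_eq_zero.1 this).resolve_left (hpq x hx)
  have ht0 : t u = 0 := by
    have := hpn u hu
    rw [hn0 u hu, mul_zero] at this
    exact (mul_eq_zero.1 this.symm).resolve_left hq0
  have hb0 : b u = 0 := by
    have := (hn u hu).eq_zero_of_eventuallyEq_const (c := 0)
      (eventually_of_mem (hs.mem_nhds hu) hn0)
    rw [hn0 u hu, zero_mul, neg_zero, zero_sub, neg_eq_zero] at this
    exact (mul_eq_zero.1 this).resolve_left hq0
  have := hsum u hu
  rw [ht0, hb0, hn0 u hu] at this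
  norm_num at this

def normal (α β : ℝ → R3) (u : ℝ) : R3 := cross (deriv α u) (β u)

structure IsMinimalRuling (s : Set ℝ) (α β : ℝ → R3) : Prop where
  isOpen : IsOpen s
  contDiffAt_α : ∀ u ∈ s, ContDiffAt ℝ 2 α u
  contDiffAt_β : ∀ u ∈ s, ContDiffAt ℝ 2 β u
  norm_deriv_α : ∀ u ∈ s, ‖deriv α u‖ = 1
  norm_β : ∀ u ∈ s, ‖β u‖ = 1
  inner_deriv_α_β : ∀ u ∈ s, ⟪deriv α u, β u⟫ = 0
  deriv_β_ne_zero : ∀ u ∈ s, deriv β u ≠ 0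
  eq₁ : ∀ u ∈ s, ⟪normal α β u, deriv (deriv α) u⟫ = ⟪normal α β u, e3⟫
  eq₂ : ∀ u ∈ s,
    ⟪normal α β u, deriv (deriv β) u⟫ + ⟪cross (deriv β u) (β u), deriv (deriv α) u⟫ =
      ⟪cross (deriv β u) (β u), e3⟫ + 2 * ⟪deriv α u, deriv β u⟫ * ⟪normal α β u, e3⟫
  eq₃ : ∀ u ∈ s,
    ⟪cross (deriv β u) (β u), deriv (deriv β) u⟫ =
      2 * ⟪deriv α u, deriv β u⟫ * ⟪cross (deriv β u) (β u), e3⟫ +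
        ‖deriv β u‖ ^ 2 * ⟪normal α β u, e3⟫
  eq₄ : ∀ u ∈ s, ‖deriv β u‖ ^ 2 * ⟪cross (deriv β u) (β u), e3⟫ = 0

namespace IsMinimalRuling

open R3

variable {s : Set ℝ} {α β : ℝ → R3} {u : ℝ}

lemma inner_deriv_α_deriv_deriv_α (h : IsMinimalRuling s α β) (hu : u ∈ s) :
    ⟪deriv α u, deriv (deriv α) u⟫ = 0 :=
  (h.contDiffAt_α u hu).hasDerivAt_deriv.inner_eq_zero_of_norm
    (eventually_of_mem (h.isOpen.mem_nhds hu) h.norm_deriv_α)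

lemma inner_β_deriv_β (h : IsMinimalRuling s α β) (hu : u ∈ s) : ⟪β u, deriv β u⟫ = 0 :=
  ((h.contDiffAt_β u hu).differentiableAt two_ne_zero).hasDerivAt.inner_eq_zero_of_norm
    (eventually_of_mem (h.isOpen.mem_nhds hu) h.norm_β)

lemma inner_deriv_deriv_α_β (h : IsMinimalRuling s α β) (hu : u ∈ s) :
    ⟪deriv (deriv α) u, β u⟫ = -⟪deriv α u, deriv β u⟫ := by
  have := (h.contDiffAt_α u hu).hasDerivAt_deriv.inner_add_inner_eq_zero
    ((h.contDiffAt_β u hu).differentiableAt two_ne_zero).hasDerivAt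
    (eventually_of_mem (h.isOpen.mem_nhds hu) h.inner_deriv_α_β)
  linarith

lemma deriv_β_eq (h : IsMinimalRuling s α β) (hu : u ∈ s) :
    deriv β u = ⟪deriv α u, deriv β u⟫ • deriv α u +
      ⟪normal α β u, deriv β u⟫ • normal α β u := by
  have := frame_sum_smul (h.norm_deriv_α u hu) (h.norm_β u hu) (h.inner_deriv_α_β u hu) (deriv β u)
  rwa [h.inner_β_deriv_β hu, zero_smul, add_zero, eq_comm] at this

lemma deriv_deriv_α_eq (h : IsMinimalRuling s α β) (hu : u ∈ s) :
    deriv (deriv α) u = -⟪deriv α u, deriv β u⟫ • β u + ⟪normal α β u, e3⟫ • normal α β u := by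
  have := frame_sum_smul (h.norm_deriv_α u hu) (h.norm_β u hu) (h.inner_deriv_α_β u hu)
    (deriv (deriv α) u)
  rwa [h.inner_deriv_α_deriv_deriv_α hu, zero_smul, zero_add, real_inner_comm,
    h.inner_deriv_deriv_α_β hu, ← normal, h.eq₁ u hu, eq_comm] at this

lemma cross_deriv_β_β (h : IsMinimalRuling s α β) (hu : u ∈ s) :
    cross (deriv β u) (β u) =
      ⟪deriv α u, deriv β u⟫ • normal α β u - ⟪normal α β u, deriv β u⟫ • deriv α u := by
  conv_lhs => rw [h.deriv_β_eq hu]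
  rw [isBilinearMap_cross.add_left, isBilinearMap_cross.smul_left, isBilinearMap_cross.smul_left,
    normal, cross_cross_right_eq_neg (h.norm_β u hu) (h.inner_deriv_α_β u hu)]
  module

lemma hasDerivAt_normal (h : IsMinimalRuling s α β) (hu : u ∈ s) :
    HasDerivAt (normal α β)
      (-⟪normal α β u, e3⟫ • deriv α u - ⟪normal α β u, deriv β u⟫ • β u) u := by
  refine ((h.contDiffAt_α u hu).hasDerivAt_deriv.cross
    ((h.contDiffAt_β u hu).differentiableAt two_ne_zero).hasDerivAt).congr_deriv ?_
  conv_lhs => rw [h.deriv_β_eq hu, h.deriv_deriv_α_eq hu]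
  simp only [isBilinearMap_cross.add_left, isBilinearMap_cross.smul_left,
    isBilinearMap_cross.add_right, isBilinearMap_cross.smul_right, cross_self, normal,
    cross_cross_left_eq_neg (h.norm_deriv_α u hu) (h.inner_deriv_α_β u hu),
    cross_cross_right_eq_neg (h.norm_β u hu) (h.inner_deriv_α_β u hu)]
  module

lemma inner_cross_deriv_β_β_e3 (h : IsMinimalRuling s α β) (hu : u ∈ s) :
    ⟪cross (deriv β u) (β u), e3⟫ = 0 :=
  (mul_eq_zero.1 (h.eq₄ u hu)).resolve_left
    (pow_ne_zero 2 (norm_ne_zero_iff.2 (h.deriv_β_ne_zero u hu)))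

lemma inner_normal_deriv_deriv_β (h : IsMinimalRuling s α β) (hu : u ∈ s) :
    ⟪normal α β u, deriv (deriv β) u⟫ = ⟪deriv α u, deriv β u⟫ * ⟪normal α β u, e3⟫ := by
  have := h.eq₂ u hu
  rw [h.inner_cross_deriv_β_β_e3 hu, h.cross_deriv_β_β hu, inner_sub_left, real_inner_smul_left,
    real_inner_smul_left, h.eq₁ u hu, h.inner_deriv_α_deriv_deriv_α hu] at this
  linarith

lemma norm_deriv_β_sq (h : IsMinimalRuling s α β) (hu : u ∈ s) :
    ‖deriv β u‖ ^ 2 = ⟪deriv α u, deriv β u⟫ ^ 2 + ⟪normal α β u, deriv β u⟫ ^ 2 := by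
  rw [← frame_sum_sq (h.norm_deriv_α u hu) (h.norm_β u hu) (h.inner_deriv_α_β u hu),
    h.inner_β_deriv_β hu, normal]
  ring

lemma mul_inner_deriv_α_deriv_deriv_β (h : IsMinimalRuling s α β) (hu : u ∈ s) :
    ⟪normal α β u, deriv β u⟫ * ⟪deriv α u, deriv (deriv β) u⟫ =
      -(⟪normal α β u, deriv β u⟫ ^ 2 * ⟪normal α β u, e3⟫) := by
  have := h.eq₃ u hu
  rw [h.inner_cross_deriv_β_β_e3 hu, h.norm_deriv_β_sq hu, h.cross_deriv_β_β hu, inner_sub_left,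
    real_inner_smul_left, real_inner_smul_left, h.inner_normal_deriv_deriv_β hu] at this
  linear_combination -this

lemma hasDerivAt_inner_normal_deriv_β (h : IsMinimalRuling s α β) (hu : u ∈ s) :
    HasDerivAt (fun t => ⟪normal α β t, deriv β t⟫) 0 u := by
  refine ((h.hasDerivAt_normal hu).inner ℝ (h.contDiffAt_β u hu).hasDerivAt_deriv).congr_deriv ?_
  rw [h.inner_normal_deriv_deriv_β hu, inner_sub_left, real_inner_smul_left,
    real_inner_smul_left, h.inner_β_deriv_β hu]
  ring

lemma hasDerivAt_inner_deriv_α_deriv_β (h : IsMinimalRuling s α β) (hu : u ∈ s) :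
    HasDerivAt (fun t => ⟪deriv α t, deriv β t⟫)
      (⟪deriv α u, deriv (deriv β) u⟫ + ⟪normal α β u, deriv β u⟫ * ⟪normal α β u, e3⟫) u := by
  refine ((h.contDiffAt_α u hu).hasDerivAt_deriv.inner ℝ
    (h.contDiffAt_β u hu).hasDerivAt_deriv).congr_deriv ?_
  rw [h.deriv_deriv_α_eq hu, inner_add_left, real_inner_smul_left, real_inner_smul_left,
    h.inner_β_deriv_β hu]
  ring

lemma hasDerivAt_inner_deriv_α_e3 (h : IsMinimalRuling s α β) (hu : u ∈ s) :
    HasDerivAt (fun t => ⟪deriv α t, e3⟫)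
      (⟪normal α β u, e3⟫ ^ 2 - ⟪deriv α u, deriv β u⟫ * ⟪β u, e3⟫) u := by
  refine ((h.contDiffAt_α u hu).hasDerivAt_deriv.inner_const e3).congr_deriv ?_
  rw [h.deriv_deriv_α_eq hu, inner_add_left, real_inner_smul_left, real_inner_smul_left]
  ring

lemma hasDerivAt_inner_normal_e3 (h : IsMinimalRuling s α β) (hu : u ∈ s) :
    HasDerivAt (fun t => ⟪normal α β t, e3⟫)
      (-(⟪normal α β u, e3⟫ * ⟪deriv α u, e3⟫) - ⟪normal α β u, deriv β u⟫ * ⟪β u, e3⟫) u := by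
  refine ((h.hasDerivAt_normal hu).inner_const e3).congr_deriv ?_
  rw [inner_sub_left, real_inner_smul_left, real_inner_smul_left, neg_mul]

lemma inner_deriv_α_deriv_β_mul (h : IsMinimalRuling s α β) (hu : u ∈ s) :
    ⟪deriv α u, deriv β u⟫ * ⟪normal α β u, e3⟫ = ⟪normal α β u, deriv β u⟫ * ⟪deriv α u, e3⟫ := by
  have := h.inner_cross_deriv_β_β_e3 hu
  rw [h.cross_deriv_β_β hu, inner_sub_left, real_inner_smul_left, real_inner_smul_left] at this
  linarith

lemma frame_e3_sum_sq (h : IsMinimalRuling s α β) (hu : u ∈ s) :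
    ⟪deriv α u, e3⟫ ^ 2 + ⟪β u, e3⟫ ^ 2 + ⟪normal α β u, e3⟫ ^ 2 = 1 := by
  rw [normal, frame_sum_sq (h.norm_deriv_α u hu) (h.norm_β u hu) (h.inner_deriv_α_β u hu), norm_e3,
    one_pow]

lemma sq_add_sq_ne_zero (h : IsMinimalRuling s α β) (hu : u ∈ s) :
    ⟪deriv α u, deriv β u⟫ ^ 2 + ⟪normal α β u, deriv β u⟫ ^ 2 ≠ 0 := by
  rw [← h.norm_deriv_β_sq hu]
  exact pow_ne_zero 2 (norm_ne_zero_iff.2 (h.deriv_β_ne_zero u hu))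

lemma inner_normal_eq_zero (h : IsMinimalRuling s α β) (hs : IsPreconnected s) :
    ∀ u ∈ s, ⟪normal α β u, deriv β u⟫ = 0 ∧ ⟪normal α β u, e3⟫ = 0 :=
  eq_zero_of_frame_equations h.isOpen hs (fun _ hu => h.hasDerivAt_inner_normal_deriv_β hu)
    (fun _ hu => h.hasDerivAt_inner_deriv_α_deriv_β hu)
    (fun _ hu => by rw [mul_add, h.mul_inner_deriv_α_deriv_deriv_β hu]; ring)
    (fun _ hu => h.hasDerivAt_inner_deriv_α_e3 hu) (fun _ hu => h.hasDerivAt_inner_normal_e3 hu)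
    (fun _ hu => h.inner_deriv_α_deriv_β_mul hu) (fun _ hu => h.frame_e3_sum_sq hu)
    (fun _ hu => h.sq_add_sq_ne_zero hu)

lemma norm_normal (h : IsMinimalRuling s α β) (hu : u ∈ s) : ‖normal α β u‖ = 1 :=
  norm_cross_of_orthonormal (h.norm_deriv_α u hu) (h.norm_β u hu) (h.inner_deriv_α_β u hu)

lemma normal_eq (h : IsMinimalRuling s α β) (hs : IsPreconnected s) {u₀ : ℝ} (hu₀ : u₀ ∈ s)
    (hu : u ∈ s) : normal α β u = normal α β u₀ := by
  refine h.isOpen.eq_of_hasDerivAt_eq_zero hs (fun x hx => ?_) hu hu₀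
  obtain ⟨hq, hn⟩ := h.inner_normal_eq_zero hs x hx
  simpa [hq, hn] using h.hasDerivAt_normal hx

lemma inner_α_normal_eq (h : IsMinimalRuling s α β) (hs : IsPreconnected s) {u₀ : ℝ}
    (hu₀ : u₀ ∈ s) (hu : u ∈ s) : ⟪α u, normal α β u₀⟫ = ⟪α u₀, normal α β u₀⟫ := by
  refine h.isOpen.eq_of_hasDerivAt_eq_zero (f := fun t => ⟪α t, normal α β u₀⟫) hs
    (fun x hx => ?_) hu hu₀
  refine (((h.contDiffAt_α x hx).differentiableAt two_ne_zero).hasDerivAt.inner_const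
    (normal α β u₀)).congr_deriv ?_
  rw [← h.normal_eq hs hu₀ hx]
  exact inner_self_cross _ _

end IsMinimalRuling

/-- Proposition 2: noncylindrical ruled minimal surfaces in ℝ³ with density e^z
are contained in planes parallel to the z-axis. -/
theorem noncylindrical_ruled_minimal_is_plane
    (a b : ℝ) (α β : ℝ → R3)
    (hα : ∀ u ∈ Set.Ioo a b, ContDiffAt ℝ 2 α u)
    (hβ : ∀ u ∈ Set.Ioo a b, ContDiffAt ℝ 2 β u)
    (hspeed : ∀ u ∈ Set.Ioo a b, ‖deriv α u‖ = 1)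
    (hunit : ∀ u ∈ Set.Ioo a b, ‖β u‖ = 1)
    (horth : ∀ u ∈ Set.Ioo a b, ⟪deriv α u, β u⟫ = 0)
    (hne : ∀ u ∈ Set.Ioo a b, deriv β u ≠ 0)
    (heq1 : ∀ u ∈ Set.Ioo a b,
      ⟪cross (deriv α u) (β u), deriv (deriv α) u⟫ = ⟪cross (deriv α u) (β u), e3⟫)
    (heq2 : ∀ u ∈ Set.Ioo a b,
      ⟪cross (deriv α u) (β u), deriv (deriv β) u⟫ +
          ⟪cross (deriv β u) (β u), deriv (deriv α) u⟫ =
        ⟪cross (deriv β u) (β u), e3⟫ +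
          2 * ⟪deriv α u, deriv β u⟫ * ⟪cross (deriv α u) (β u), e3⟫)
    (heq3 : ∀ u ∈ Set.Ioo a b,
      ⟪cross (deriv β u) (β u), deriv (deriv β) u⟫ =
        2 * ⟪deriv α u, deriv β u⟫ * ⟪cross (deriv β u) (β u), e3⟫ +
          ‖deriv β u‖ ^ 2 * ⟪cross (deriv α u) (β u), e3⟫)
    (heq4 : ∀ u ∈ Set.Ioo a b,
      ‖deriv β u‖ ^ 2 * ⟪cross (deriv β u) (β u), e3⟫ = 0) :
    ∃ w : R3, w ≠ 0 ∧ ⟪w, e3⟫ = 0 ∧ ∃ k : ℝ,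
      ∀ u ∈ Set.Ioo a b, ⟪α u, w⟫ = k ∧ ⟪β u, w⟫ = 0 := by
  rcases (Set.Ioo a b).eq_empty_or_nonempty with hs | ⟨u₀, hu₀⟩
  · exact ⟨EuclideanSpace.single 0 1, by simp, by simp [e3, R3.inner_eq], 0, by simp [hs]⟩
  have h : IsMinimalRuling (Set.Ioo a b) α β :=
    ⟨isOpen_Ioo, hα, hβ, hspeed, hunit, horth, hne, heq1, heq2, heq3, heq4⟩
  refine ⟨normal α β u₀, ?_, (h.inner_normal_eq_zero isPreconnected_Ioo u₀ hu₀).2,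
    ⟪α u₀, normal α β u₀⟫, fun u hu => ⟨h.inner_α_normal_eq isPreconnected_Ioo hu₀ hu, ?_⟩⟩
  · rw [← norm_ne_zero_iff, h.norm_normal hu₀]
    exact one_ne_zero
  · rw [← h.normal_eq isPreconnected_Ioo hu₀ hu]
    exact R3.inner_cross_self _ _
end
end

section
/- Let β ∈ ℝ³ be a constant unit vector and let α : ℝ → ℝ³ be twice differentiable with ‖α'(u)‖ = 1 and ⟨α'(u), β⟩ = 0 for all u ∈ ℝ. If ⟨α'(u) × β, α''(u)⟩ = ⟨α'(u) × β, e₃⟩ for all u ∈ ℝ, then α''(u) + ⟨e₃, α'(u)⟩·α'(u) = e₃ − ⟨e₃, β⟩·β for all u ∈ ℝ. -/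
/-! The unit tangent `T = α'` of the base curve is orthogonal to the ruling `β`, so
`(T, β, T × β)` is an orthonormal frame. Differentiating `‖T‖ = 1` and `⟪T, β⟫ = 0` shows that
`α''` is orthogonal to `T` and `β`, hence `α'' = ⟪T × β, α''⟫ (T × β)`, and the minimality
equation turns this coefficient into `⟪T × β, e₃⟫`. Expanding `e₃` in the same frame gives
`⟪T × β, e₃⟫ (T × β) = e₃ - ⟪e₃, T⟫ T - ⟪e₃, β⟫ β`. -/

noncomputable section
open scoped RealInnerProductSpace

section ConstantInner

variable {E : Type*} [NormedAddCommGroup E] [InnerProductSpace ℝ E] {f : ℝ → E} {u : ℝ}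

theorem inner_deriv_eq_zero_of_norm_eq (hf : DifferentiableAt ℝ f u) {c : ℝ}
    (hc : ∀ t, ‖f t‖ = c) : ⟪f u, deriv f u⟫ = 0 := by
  have h := hf.hasDerivAt.norm_sq
  rw [show (‖f ·‖ ^ 2) = fun _ => c ^ 2 from funext fun t => by rw [hc]] at h
  simpa using h.unique (hasDerivAt_const u (c ^ 2))

theorem inner_deriv_eq_zero_of_inner_eq (hf : DifferentiableAt ℝ f u) {w : E} {c : ℝ}
    (hc : ∀ t, ⟪f t, w⟫ = c) : ⟪deriv f u, w⟫ = 0 := by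
  have h := hf.hasDerivAt.inner ℝ (hasDerivAt_const u w)
  rw [show (fun t => ⟪f t, w⟫) = fun _ => c from funext hc] at h
  simpa using h.unique (hasDerivAt_const u c)

end ConstantInner

section CrossProduct

theorem inner_self_cross (v w : R3) : ⟪v, cross v w⟫ = 0 := by
  simp only [cross, WithLp.equiv_symm_apply, PiLp.inner_apply, RCLike.inner_apply,
    Real.ringHom_apply, Fin.sum_univ_three, Matrix.cons_val_zero, Matrix.cons_val_one,
    Matrix.cons_val]
  ring

theorem inner_cross_self (v w : R3) : ⟪w, cross v w⟫ = 0 := by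
  simp only [cross, WithLp.equiv_symm_apply, PiLp.inner_apply, RCLike.inner_apply,
    Real.ringHom_apply, Fin.sum_univ_three, Matrix.cons_val_zero, Matrix.cons_val_one,
    Matrix.cons_val]
  ring

theorem norm_cross_sq (v w : R3) : ‖cross v w‖ ^ 2 = ‖v‖ ^ 2 * ‖w‖ ^ 2 - ⟪v, w⟫ ^ 2 := by
  simp only [cross, WithLp.equiv_symm_apply, EuclideanSpace.norm_sq_eq, Real.norm_eq_abs, sq_abs,
    PiLp.inner_apply, RCLike.inner_apply, Real.ringHom_apply, Fin.sum_univ_three,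
    Matrix.cons_val_zero, Matrix.cons_val_one, Matrix.cons_val]
  ring

theorem orthonormal_cross {v w : R3} (hv : ‖v‖ = 1) (hw : ‖w‖ = 1) (hvw : ⟪v, w⟫ = 0) :
    Orthonormal ℝ ![v, w, cross v w] := by
  have hcross : ‖cross v w‖ = 1 := by
    rw [← pow_eq_one_iff_of_nonneg (norm_nonneg _) two_ne_zero, norm_cross_sq, hv, hw, hvw]
    norm_num
  simp [orthonormal_vecCons_iff, hv, hw, hcross, hvw, inner_self_cross, inner_cross_self]

def crossFrame {v w : R3} (hv : ‖v‖ = 1) (hw : ‖w‖ = 1) (hvw : ⟪v, w⟫ = 0) :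
    OrthonormalBasis (Fin 3) ℝ R3 :=
  (basisOfOrthonormalOfCardEqFinrank (orthonormal_cross hv hw hvw) (by simp)).toOrthonormalBasis
    (by simpa using orthonormal_cross hv hw hvw)

theorem eq_inner_smul_add_inner_smul_add_inner_cross_smul {v w : R3} (hv : ‖v‖ = 1)
    (hw : ‖w‖ = 1) (hvw : ⟪v, w⟫ = 0) (x : R3) :
    x = ⟪v, x⟫ • v + ⟪w, x⟫ • w + ⟪cross v w, x⟫ • cross v w := by
  simpa [crossFrame, Fin.sum_univ_three, add_assoc] using ((crossFrame hv hw hvw).sum_repr' x).symm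

theorem add_inner_smul_eq_sub_inner_smul {v w : R3} (hv : ‖v‖ = 1) (hw : ‖w‖ = 1)
    (hvw : ⟪v, w⟫ = 0) {x y : R3} (hvx : ⟪v, x⟫ = 0) (hwx : ⟪w, x⟫ = 0)
    (hxy : ⟪cross v w, x⟫ = ⟪cross v w, y⟫) :
    x + ⟪y, v⟫ • v = y - ⟪y, w⟫ • w := by
  have hx := eq_inner_smul_add_inner_smul_add_inner_cross_smul hv hw hvw x
  have hy := eq_inner_smul_add_inner_smul_add_inner_cross_smul hv hw hvw y
  rw [hvx, hwx, hxy, zero_smul, zero_smul, zero_add, zero_add] at hx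
  rw [hx, real_inner_comm v y, real_inner_comm w y]
  linear_combination (norm := module) -hy

end CrossProduct

/-- Equation (10): the ODE satisfied by the base curve of a cylindrical ruled
minimal surface in ℝ³ with density e^z. -/
theorem cylindrical_base_curve_ode
    (β : R3) (hβ : ‖β‖ = 1) (α : ℝ → R3) (hα : ContDiff ℝ 2 α)
    (hspeed : ∀ u, ‖deriv α u‖ = 1)
    (horth : ∀ u, ⟪deriv α u, β⟫ = 0)
    (hmin : ∀ u, ⟪cross (deriv α u) β, deriv (deriv α) u⟫ = ⟪cross (deriv α u) β, e3⟫) :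
    ∀ u, deriv (deriv α) u + ⟪e3, deriv α u⟫ • deriv α u = e3 - ⟪e3, β⟫ • β := by
  intro u
  have hd : DifferentiableAt ℝ (deriv α) u := hα.differentiable_deriv_two u
  refine add_inner_smul_eq_sub_inner_smul (hspeed u) hβ (horth u)
    (inner_deriv_eq_zero_of_norm_eq hd hspeed) ?_ (hmin u)
  rw [real_inner_comm]
  exact inner_deriv_eq_zero_of_inner_eq hd horth
end
end

section
/- Let β = (0, 0, 1) or β = (0, 0, −1), and let α : ℝ → ℝ³ be twice differentiable with ‖α'(u)‖ = 1, ⟨α'(u), β⟩ = 0, and ⟨α'(u) × β, α''(u)⟩ = ⟨α'(u) × β, e₃⟩ for all u ∈ ℝ. Then α''(u) = 0 for all u, i.e. α is a straight line, and the ruled surface X(u, v) = α(u) + v·β is contained in a plane parallel to the z-axis. -/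
/-!
Differentiating `‖α'‖ = 1` and `⟪α', β⟫ = 0` shows that `α''` is orthogonal to `α'` and to `β`.
Since `β = ±e₃`, the vector `α' × β` is horizontal, so the minimality equation says that `α''` is
orthogonal to `α' × β` as well. As `α'` and `β` are orthonormal, `α', β, α' × β` span `ℝ³`, hence
`α'' = 0`. Then `α'` is a constant `a`, and the surface lies in the vertical plane through `α 0`
with normal `a × β`.
-/

noncomputable section
open scoped RealInnerProductSpace

section Curves

variable {E : Type*} [NormedAddCommGroup E] [InnerProductSpace ℝ E] {f g : ℝ → E}

theorem inner_deriv_add_inner_deriv_eq_zero {c : ℝ} (hfg : ∀ t, ⟪f t, g t⟫ = c) {u : ℝ}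
    (hf : DifferentiableAt ℝ f u) (hg : DifferentiableAt ℝ g u) :
    ⟪f u, deriv g u⟫ + ⟪deriv f u, g u⟫ = 0 := by
  rw [← deriv_inner_apply ℝ hf hg, funext hfg, deriv_const]

theorem inner_deriv_self_eq_zero_of_norm_const {r : ℝ} (hf : ∀ t, ‖f t‖ = r) {u : ℝ}
    (hfu : DifferentiableAt ℝ f u) : ⟪f u, deriv f u⟫ = 0 := by
  have h := inner_deriv_add_inner_deriv_eq_zero (c := r ^ 2)
    (fun t ↦ by rw [real_inner_self_eq_norm_sq, hf]) hfu hfu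
  rwa [real_inner_comm (f u), ← two_mul, mul_eq_zero, or_iff_right two_ne_zero] at h

theorem inner_deriv_eq_zero_of_inner_const {w : E} {c : ℝ} (hf : ∀ t, ⟪f t, w⟫ = c) {u : ℝ}
    (hfu : DifferentiableAt ℝ f u) : ⟪deriv f u, w⟫ = 0 := by
  simpa using inner_deriv_add_inner_deriv_eq_zero hf hfu (differentiableAt_const w)

theorem inner_eq_of_inner_deriv_eq_zero {w : E} (hf : Differentiable ℝ f)
    (hf' : ∀ t, ⟪deriv f t, w⟫ = 0) (u v : ℝ) : ⟪f u, w⟫ = ⟪f v, w⟫ :=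
  is_const_of_deriv_eq_zero (hf.inner ℝ (differentiable_const w))
    (fun t ↦ by simpa [hf'] using deriv_inner_apply ℝ (hf t) (differentiableAt_const w)) u v

end Curves

section CrossProduct

theorem inner_eq_sum_three (x y : R3) : ⟪x, y⟫ = x 0 * y 0 + x 1 * y 1 + x 2 * y 2 := by
  simp [PiLp.inner_apply, Fin.sum_univ_three, mul_comm]

@[simp] theorem cross_apply_zero (v w : R3) : cross v w 0 = v 1 * w 2 - v 2 * w 1 := rfl
@[simp] theorem cross_apply_one (v w : R3) : cross v w 1 = v 2 * w 0 - v 0 * w 2 := rfl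
@[simp] theorem cross_apply_two (v w : R3) : cross v w 2 = v 0 * w 1 - v 1 * w 0 := rfl

theorem inner_cross_left (v w : R3) : ⟪cross v w, v⟫ = 0 := by
  simp only [inner_eq_sum_three, cross_apply_zero, cross_apply_one, cross_apply_two]; ring

theorem inner_cross_right (v w : R3) : ⟪cross v w, w⟫ = 0 := by
  simp only [inner_eq_sum_three, cross_apply_zero, cross_apply_one, cross_apply_two]; ring

theorem cross_cross_eq_inner_smul_sub_inner_smul (u v w : R3) :
    cross (cross u v) w = ⟪u, w⟫ • v - ⟪v, w⟫ • u := by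
  ext i; fin_cases i <;> simp [inner_eq_sum_three] <;> ring

theorem cross_ne_zero_of_orthonormal {v w : R3} (hv : ‖v‖ = 1) (hw : ‖w‖ = 1)
    (hvw : ⟪v, w⟫ = 0) : cross v w ≠ 0 := by
  intro h
  simpa [h, hv, hw, hvw] using norm_cross_sq v w

theorem eq_zero_of_inner_eq_zero_of_cross_ne_zero {u v w : R3} (huv : cross u v ≠ 0)
    (hu : ⟪u, w⟫ = 0) (hv : ⟪v, w⟫ = 0) (huvw : ⟪cross u v, w⟫ = 0) : w = 0 := by
  have h := norm_cross_sq (cross u v) w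
  rw [cross_cross_eq_inner_smul_sub_inner_smul, hu, hv, huvw] at h
  have h' : ‖cross u v‖ ^ 2 * ‖w‖ ^ 2 = 0 := by simpa using h.symm
  simpa [huv] using h'

theorem norm_e3 : ‖e3‖ = 1 := by
  simp [EuclideanSpace.norm_eq, e3, Fin.sum_univ_three]

theorem inner_cross_e3_of_vertical {v β : R3} (hβ : β = e3 ∨ β = -e3) :
    ⟪cross v β, e3⟫ = 0 := by
  rcases hβ with rfl | rfl
  · exact inner_cross_right v e3
  · simpa using inner_cross_right v (-e3)

end CrossProduct

/-- Proposition 3: if the rulings are vertical, a cylindrical ruled minimal surface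
in ℝ³ with density e^z is a plane parallel to the z-axis. -/
theorem vertical_rulings_give_plane
    (β : R3) (hβ : β = e3 ∨ β = -e3) (α : ℝ → R3) (hα : ContDiff ℝ 2 α)
    (hspeed : ∀ u, ‖deriv α u‖ = 1)
    (horth : ∀ u, ⟪deriv α u, β⟫ = 0)
    (hmin : ∀ u, ⟪cross (deriv α u) β, deriv (deriv α) u⟫ = ⟪cross (deriv α u) β, e3⟫) :
    (∀ u, deriv (deriv α) u = 0) ∧
      ∃ w : R3, w ≠ 0 ∧ ⟪w, e3⟫ = 0 ∧ ∃ k : ℝ,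
        ∀ u v : ℝ, ⟪α u + v • β, w⟫ = k := by
  have hα' : Differentiable ℝ (deriv α) := hα.differentiable_deriv_two
  have hβ1 : ‖β‖ = 1 := by rcases hβ with rfl | rfl <;> simp [norm_e3]
  have hcross : ∀ u, cross (deriv α u) β ≠ 0 := fun u ↦
    cross_ne_zero_of_orthonormal (hspeed u) hβ1 (horth u)
  have hα'' : ∀ u, deriv (deriv α) u = 0 := fun u ↦
    eq_zero_of_inner_eq_zero_of_cross_ne_zero (hcross u)
      (inner_deriv_self_eq_zero_of_norm_const hspeed (hα' u))
      (by rw [real_inner_comm]; exact inner_deriv_eq_zero_of_inner_const horth (hα' u))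
      ((hmin u).trans (inner_cross_e3_of_vertical hβ))
  have hconst : ∀ u, deriv α u = deriv α 0 := fun u ↦ is_const_of_deriv_eq_zero hα' hα'' u 0
  set w := cross (deriv α 0) β
  refine ⟨hα'', w, hcross 0, inner_cross_e3_of_vertical hβ, ⟪α 0, w⟫, fun u v ↦ ?_⟩
  have hplane : ⟪α u, w⟫ = ⟪α 0, w⟫ :=
    inner_eq_of_inner_deriv_eq_zero (hα.differentiable two_ne_zero)
      (fun t ↦ by rw [hconst t, real_inner_comm]; exact inner_cross_left _ _) u 0
  rw [inner_add_left, real_inner_smul_left, real_inner_comm w β, inner_cross_right, hplane]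
  ring
end
end

section
/- Fix A > 0 and define x, z : ℝ → ℝ by x(u) = 2·arctan(√A·e^u) and z(u) = log(e^{−u} + A·e^{u}). Then for every u ∈ ℝ: (a) x'(u)² + z'(u)² = 1; (b) x''(u) + x'(u)·z'(u) = 0; (c) z''(u) + z'(u)² = 1; and (d) the curve α(u) = (x(u), 0, z(u)) together with β = (0, ε, 0), ε ∈ {−1, 1}, satisfies ⟨α'(u), β⟩ = 0 and the minimality equation ⟨α'(u) × β, α''(u)⟩ = ⟨α'(u) × β, e₃⟩. -/
noncomputable section
open scoped RealInnerProductSpace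

/-!
Write `D = e^{-u} + A e^u` and `N = A e^u - e^{-u}`, so that `D' = N`, `N' = D` and
`D² - N² = 4A`. Then `x' = 2√A / D` and `z' = N / D`, from which (a), (b), (c) are direct
computations. For a curve `(x, 0, z)` and `β = (0, ε, 0)` one has `α' × β = ε (-z', 0, x')`, so the
minimality equation reads `ε (x' z'' - z' x'') = ε x'`, which is `x'` times (c) minus `z'` times (b).
-/

open Real

section DerivSwap

variable {D N : ℝ → ℝ} {u : ℝ}

theorem HasDerivAt.const_div {n : ℝ} (hD : HasDerivAt D n u) (hD0 : D u ≠ 0)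
    (c : ℝ) : HasDerivAt (fun t => c / D t) (-(c / D u * (n / D u))) u := by
  refine ((hasDerivAt_const u c).div hD hD0).congr_deriv ?_
  field_simp
  ring

theorem hasDerivAt_div_of_deriv_swap (hD : ∀ t, HasDerivAt D (N t) t)
    (hN : ∀ t, HasDerivAt N (D t) t) (hD0 : D u ≠ 0) :
    HasDerivAt (fun t => N t / D t) (1 - (N u / D u) ^ 2) u := by
  refine ((hN u).div (hD u) hD0).congr_deriv ?_
  field_simp

end DerivSwap

section Profile

variable (A : ℝ)

theorem hasDerivAt_exp_neg_add_mul_exp (u : ℝ) :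
    HasDerivAt (fun t => exp (-t) + A * exp t) (A * exp u - exp (-u)) u := by
  refine ((hasDerivAt_neg u).exp.add ((hasDerivAt_exp u).const_mul A)).congr_deriv ?_
  ring

theorem hasDerivAt_mul_exp_sub_exp_neg (u : ℝ) :
    HasDerivAt (fun t => A * exp t - exp (-t)) (exp (-u) + A * exp u) u := by
  refine (((hasDerivAt_exp u).const_mul A).sub (hasDerivAt_neg u).exp).congr_deriv ?_
  ring

theorem sq_exp_neg_add_mul_exp_sub_sq (u : ℝ) :
    (exp (-u) + A * exp u) ^ 2 - (A * exp u - exp (-u)) ^ 2 = 4 * A := by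
  have h : exp (-u) * exp u = 1 := by rw [← exp_add, neg_add_cancel, exp_zero]
  linear_combination 4 * A * h

variable {A}

theorem exp_neg_add_mul_exp_pos (hA : 0 ≤ A) (u : ℝ) : 0 < exp (-u) + A * exp u := by
  positivity

theorem hasDerivAt_two_mul_arctan_sqrt_mul_exp (hA : 0 ≤ A) (u : ℝ) :
    HasDerivAt (fun t => 2 * arctan (√A * exp t)) (2 * √A / (exp (-u) + A * exp u)) u := by
  refine (((hasDerivAt_exp u).const_mul √A).arctan.const_mul 2).congr_deriv ?_
  rw [mul_pow, sq_sqrt hA, exp_neg]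
  field_simp

theorem hasDerivAt_log_exp_neg_add_mul_exp (hA : 0 ≤ A) (u : ℝ) :
    HasDerivAt (fun t => log (exp (-t) + A * exp t))
      ((A * exp u - exp (-u)) / (exp (-u) + A * exp u)) u :=
  (hasDerivAt_exp_neg_add_mul_exp A u).log (exp_neg_add_mul_exp_pos hA u).ne'

theorem sq_two_sqrt_div_add_sq_div_eq_one (hA : 0 ≤ A) (u : ℝ) :
    (2 * √A / (exp (-u) + A * exp u)) ^ 2 + ((A * exp u - exp (-u)) / (exp (-u) + A * exp u)) ^ 2
      = 1 := by
  have hD := (exp_neg_add_mul_exp_pos hA u).ne'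
  field_simp
  linear_combination 4 * sq_sqrt hA - sq_exp_neg_add_mul_exp_sub_sq A u

end Profile

section XZPlane

theorem hasDerivAt_euclidean_three {x y z : ℝ → ℝ} {x' y' z' u : ℝ} (hx : HasDerivAt x x' u)
    (hy : HasDerivAt y y' u) (hz : HasDerivAt z z' u) :
    HasDerivAt (fun t => !₂[x t, y t, z t]) !₂[x', y', z'] u := by
  have h : HasDerivAt (fun t => ![x t, y t, z t]) ![x', y', z'] u :=
    hasDerivAt_pi.2 fun i => by fin_cases i <;> simpa
  exact (PiLp.hasFDerivAt_toLp 2 _).comp_hasDerivAt u h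

theorem deriv_xzPlane_curve {x z : ℝ → ℝ} (hx : Differentiable ℝ x) (hz : Differentiable ℝ z) :
    deriv (fun t => !₂[x t, 0, z t]) = fun t => !₂[deriv x t, 0, deriv z t] :=
  funext fun t =>
    (hasDerivAt_euclidean_three (hx t).hasDerivAt (hasDerivAt_const t 0) (hz t).hasDerivAt).deriv

theorem inner_xzPlane_yAxis_eq_zero (a b ε : ℝ) : ⟪!₂[a, 0, b], !₂[0, ε, 0]⟫ = (0 : ℝ) := by
  simp [PiLp.inner_apply, Fin.sum_univ_three]

theorem inner_cross_xzPlane_yAxis (a b c d ε : ℝ) :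
    ⟪cross !₂[a, 0, b] !₂[0, ε, 0], !₂[c, 0, d]⟫ = ε * (a * d - b * c) := by
  simp [cross, PiLp.inner_apply, Fin.sum_univ_three]
  ring

end XZPlane

theorem explicit_surface_horizontal_ruling_general
    (A : ℝ) (hA : 0 < A) (x z : ℝ → ℝ)
    (hx : ∀ u, x u = 2 * Real.arctan (Real.sqrt A * Real.exp u))
    (hz : ∀ u, z u = Real.log (Real.exp (-u) + A * Real.exp u))
    (ε : ℝ)
    (α : ℝ → R3)
    (hα : ∀ u, α u = (WithLp.equiv 2 (Fin 3 → ℝ)).symm ![x u, 0, z u])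
    (β : R3) (hβ : β = (WithLp.equiv 2 (Fin 3 → ℝ)).symm ![0, ε, 0]) :
    ∀ u : ℝ,
      deriv x u ^ 2 + deriv z u ^ 2 = 1 ∧
      deriv (deriv x) u + deriv x u * deriv z u = 0 ∧
      deriv (deriv z) u + deriv z u ^ 2 = 1 ∧
      ⟪deriv α u, β⟫ = 0 ∧
      ⟪cross (deriv α u) β, deriv (deriv α) u⟫ = ⟪cross (deriv α u) β, e3⟫ := by
  have hD u := (exp_neg_add_mul_exp_pos hA.le u).ne'
  have hx' u : HasDerivAt x (2 * √A / (exp (-u) + A * exp u)) u := by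
    rw [funext hx]; exact hasDerivAt_two_mul_arctan_sqrt_mul_exp hA.le u
  have hz' u : HasDerivAt z ((A * exp u - exp (-u)) / (exp (-u) + A * exp u)) u := by
    rw [funext hz]; exact hasDerivAt_log_exp_neg_add_mul_exp hA.le u
  have dx : deriv x = _ := funext fun u => (hx' u).deriv
  have dz : deriv z = _ := funext fun u => (hz' u).deriv
  have ddx u : HasDerivAt (deriv x) (-(deriv x u * deriv z u)) u := by
    rw [dx, dz]
    exact (hasDerivAt_exp_neg_add_mul_exp A u).const_div (hD u) _
  have ddz u : HasDerivAt (deriv z) (1 - deriv z u ^ 2) u := by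
    rw [dz]
    exact hasDerivAt_div_of_deriv_swap (hasDerivAt_exp_neg_add_mul_exp A)
      (hasDerivAt_mul_exp_sub_exp_neg A) (hD u)
  have dα : deriv α = fun u => !₂[deriv x u, 0, deriv z u] := by
    rw [funext hα]
    exact deriv_xzPlane_curve (fun u => (hx' u).differentiableAt)
      (fun u => (hz' u).differentiableAt)
  have ddα : deriv (deriv α) = fun u => !₂[-(deriv x u * deriv z u), 0, 1 - deriv z u ^ 2] := by
    rw [dα, deriv_xzPlane_curve (fun u => (ddx u).differentiableAt)
      (fun u => (ddz u).differentiableAt)]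
    exact funext fun u => by rw [(ddx u).deriv, (ddz u).deriv]
  intro u
  refine ⟨?_, by rw [(ddx u).deriv]; ring, by rw [(ddz u).deriv]; ring, ?_, ?_⟩
  · rw [dx, dz]
    exact sq_two_sqrt_div_add_sq_div_eq_one hA.le u
  · rw [dα, hβ, WithLp.equiv_symm_apply, inner_xzPlane_yAxis_eq_zero]
  · rw [ddα, dα, hβ, WithLp.equiv_symm_apply, inner_cross_xzPlane_yAxis,
      show e3 = !₂[0, 0, 1] from rfl, inner_cross_xzPlane_yAxis]
    ring

/-- Proposition 4: the explicit cylindrical ruled minimal surfaces with rulings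
β = (0, ±1, 0) in ℝ³ with density e^z. -/
theorem explicit_surface_horizontal_ruling
    (A : ℝ) (hA : 0 < A) (x z : ℝ → ℝ)
    (hx : ∀ u, x u = 2 * Real.arctan (Real.sqrt A * Real.exp u))
    (hz : ∀ u, z u = Real.log (Real.exp (-u) + A * Real.exp u))
    (ε : ℝ) (hε : ε = 1 ∨ ε = -1)
    (α : ℝ → R3)
    (hα : ∀ u, α u = (WithLp.equiv 2 (Fin 3 → ℝ)).symm ![x u, 0, z u])
    (β : R3) (hβ : β = (WithLp.equiv 2 (Fin 3 → ℝ)).symm ![0, ε, 0]) :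
    ∀ u : ℝ,
      deriv x u ^ 2 + deriv z u ^ 2 = 1 ∧
      deriv (deriv x) u + deriv x u * deriv z u = 0 ∧
      deriv (deriv z) u + deriv z u ^ 2 = 1 ∧
      ⟪deriv α u, β⟫ = 0 ∧
      ⟪cross (deriv α u) β, deriv (deriv α) u⟫ = ⟪cross (deriv α u) β, e3⟫ :=
  explicit_surface_horizontal_ruling_general A hA x z hx hz ε α hα β hβ
end
end

section
/- Let b > 0 and let z : ℝ → ℝ be twice differentiable with z''(u) + z'(u)² = b² for all u ∈ ℝ. If |z'(u₀)| < b for some u₀ ∈ ℝ, then there exist A > 0 and C ∈ ℝ such that z(u) = log(e^{−bu} + A·e^{bu}) + C for all u ∈ ℝ. -/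
noncomputable section
open scoped RealInnerProductSpace

/-! The Riccati equation z'' + z'² = b² linearises under z = log w to w'' = b² w.
Concretely, for c = ±b the functions (z' + c)·e^z solve y' = c y, hence equal
(z'(0) + c)·e^{z(0)}·e^{cu}; their difference is 2b·e^z. The slope condition
|z'(u₀)| < b makes the coefficients of e^{bu} and e^{-bu} positive. -/

open Real

lemma eq_mul_exp_of_hasDerivAt_mul_self {c : ℝ} {y : ℝ → ℝ}
    (hy : ∀ u, HasDerivAt y (c * y u) u) (u : ℝ) :
    y u = y 0 * exp (c * u) := by
  have hdecay : ∀ x, HasDerivAt (fun u ↦ y u * exp (-(c * u))) 0 x := fun x ↦ by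
    refine ((hy x).mul (((hasDerivAt_id' x).const_mul c).neg.exp)).congr_deriv ?_
    ring
  have hconst := is_const_of_deriv_eq_zero (fun x ↦ (hdecay x).differentiableAt)
    (fun x ↦ (hdecay x).deriv) u 0
  simp only [mul_zero, neg_zero, exp_zero, mul_one] at hconst
  rw [← hconst, mul_assoc, ← exp_add, neg_add_cancel, exp_zero, mul_one]

lemma hasDerivAt_add_mul_exp_of_riccati {b c : ℝ} {z z' z'' : ℝ → ℝ}
    (hz : ∀ u, HasDerivAt z (z' u) u) (hz' : ∀ u, HasDerivAt z' (z'' u) u)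
    (hode : ∀ u, z'' u + z' u ^ 2 = b ^ 2) (hc : c ^ 2 = b ^ 2) (u : ℝ) :
    HasDerivAt (fun u ↦ (z' u + c) * exp (z u)) (c * ((z' u + c) * exp (z u))) u := by
  refine (((hz' u).add_const c).mul (hz u).exp).congr_deriv ?_
  linear_combination exp (z u) * hode u - exp (z u) * hc

lemma exists_log_form_of_exp_eq {b α β : ℝ} {z : ℝ → ℝ} (hα : 0 < α) (hβ : 0 < β)
    (hz : ∀ u, exp (z u) = α * exp (-(b * u)) + β * exp (b * u)) :
    ∃ A > 0, ∃ C : ℝ, ∀ u, z u = log (exp (-(b * u)) + A * exp (b * u)) + C := by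
  refine ⟨β / α, div_pos hβ hα, log α, fun u ↦ ?_⟩
  have hfactor : α * exp (-(b * u)) + β * exp (b * u)
      = (exp (-(b * u)) + β / α * exp (b * u)) * α := by
    field_simp
  rw [← log_exp (z u), hz u, hfactor, log_mul (by positivity) hα.ne']

/-- The Riccati-type ODE z'' + z'² = b²: globally defined solutions with
|z'(u₀)| < b at some point are exactly z(u) = log(e^{-bu} + A e^{bu}) + C. -/
theorem riccati_ode_solution
    (b : ℝ) (hb : 0 < b) (z : ℝ → ℝ) (hz : ContDiff ℝ 2 z)
    (hode : ∀ u, deriv (deriv z) u + deriv z u ^ 2 = b ^ 2)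
    (u₀ : ℝ) (hslope : |deriv z u₀| < b) :
    ∃ A > 0, ∃ C : ℝ, ∀ u,
      z u = Real.log (Real.exp (-(b * u)) + A * Real.exp (b * u)) + C := by
  have hz' : ∀ u, HasDerivAt z (deriv z u) u :=
    fun u ↦ (hz.differentiable two_ne_zero u).hasDerivAt
  have hz'' : ∀ u, HasDerivAt (deriv z) (deriv (deriv z) u) u :=
    fun u ↦ (hz.differentiable_deriv_two u).hasDerivAt
  set g := fun u ↦ (deriv z u + b) * exp (z u)
  set h := fun u ↦ (deriv z u + -b) * exp (z u)
  have hg : ∀ u, g u = g 0 * exp (b * u) := eq_mul_exp_of_hasDerivAt_mul_self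
    (hasDerivAt_add_mul_exp_of_riccati hz' hz'' hode rfl)
  have hh : ∀ u, h u = h 0 * exp (-b * u) := eq_mul_exp_of_hasDerivAt_mul_self
    (hasDerivAt_add_mul_exp_of_riccati hz' hz'' hode (neg_sq b))
  obtain ⟨hslope_lo, hslope_hi⟩ := abs_lt.mp hslope
  have hg₀ : 0 < g 0 := by
    have : 0 < g u₀ := mul_pos (by linarith) (exp_pos _)
    rw [hg] at this
    exact pos_of_mul_pos_left this (exp_pos _).le
  have hh₀ : h 0 < 0 := by
    have : h u₀ < 0 := mul_neg_of_neg_of_pos (by linarith) (exp_pos _)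
    rw [hh] at this
    exact neg_of_mul_neg_left this (exp_pos _).le
  refine exists_log_form_of_exp_eq (α := -h 0 / (2 * b)) (β := g 0 / (2 * b))
    (div_pos (neg_pos.mpr hh₀) (by positivity)) (by positivity) fun u ↦ ?_
  have hdiff : g u - h u = 2 * b * exp (z u) := by ring
  rw [hg, hh, neg_mul] at hdiff
  field_simp
  linarith
end
end

section
/- Let g, h : ℝ → ℝ be twice differentiable functions and suppose that g''(u)·(1 + h'(v)²) + h''(v)·(1 + g'(u)²) = 1 + g'(u)² + h'(v)² for all u, v ∈ ℝ. Then g is affine or h is affine: either there exist a, b ∈ ℝ with g(u) = a·u + b for all u ∈ ℝ, or there exist c, d ∈ ℝ with h(v) = c·v + d for all v ∈ ℝ. -/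
/-!
Write `P = 1 + g'²`, `A = 1 - g''`, `Q = 1 + h'²`, `B = 1 - h''`; the equation becomes
`A(u) Q(v) + P(u) B(v) = 1`. If two of the vectors `(A(u), P(u))` are linearly independent, they
pin down `(Q(v), B(v))`, which is therefore constant; otherwise all of them are proportional and the
equation forces them to be equal. So `g'²` or `h'²` is constant, and a continuous function with
constant square on `ℝ` is constant.
-/

open Set

theorem const_or_const_of_mul_add_mul_eq_one {α β K : Type*} [CommRing K] [NoZeroDivisors K]
    {a p : α → K} {q b : β → K} (h : ∀ u v, a u * q v + p u * b v = 1) :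
    (∀ u u', a u = a u' ∧ p u = p u') ∨ (∀ v v', q v = q v' ∧ b v = b v') := by
  by_cases hdet : ∃ u₁ u₂, a u₁ * p u₂ - a u₂ * p u₁ ≠ 0
  · obtain ⟨u₁, u₂, hdet⟩ := hdet
    right
    intro v v'
    -- Cramer's rule for the two equations at `u₁` and `u₂`
    have hq : (q v - q v') * (a u₁ * p u₂ - a u₂ * p u₁) = 0 := by
      linear_combination p u₂ * (h u₁ v - h u₁ v') - p u₁ * (h u₂ v - h u₂ v')
    have hb : (b v - b v') * (a u₁ * p u₂ - a u₂ * p u₁) = 0 := by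
      linear_combination a u₁ * (h u₂ v - h u₂ v') - a u₂ * (h u₁ v - h u₁ v')
    exact ⟨sub_eq_zero.mp ((mul_eq_zero.mp hq).resolve_right hdet),
      sub_eq_zero.mp ((mul_eq_zero.mp hb).resolve_right hdet)⟩
  · push Not at hdet
    obtain hβ | ⟨⟨v⟩⟩ := isEmpty_or_nonempty β
    · exact Or.inr fun v => isEmptyElim v
    -- all `(a u, p u)` are proportional, and pairing with one `(q v, b v)` fixes the factor
    refine Or.inl fun u u' => ⟨?_, ?_⟩
    · linear_combination a u' * h u v - a u * h u' v + b v * hdet u u'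
    · linear_combination p u' * h u v - p u * h u' v - q v * hdet u u'

theorem PreconnectedSpace.constant_of_sq_constant {α K : Type*} [TopologicalSpace α]
    [PreconnectedSpace α] [TopologicalSpace K] [T1Space K] [CommRing K] [NoZeroDivisors K]
    {f : α → K} (hf : Continuous f) (hsq : ∀ x y, f x ^ 2 = f y ^ 2) (x y : α) : f x = f y := by
  have hmaps : MapsTo f univ {f x, -f x} := fun z _ => by
    simpa using sq_eq_sq_iff_eq_or_eq_neg.mp (hsq z x)
  exact isPreconnected_univ.constant_of_mapsTo (toFinite _).isDiscrete hf.continuousOn hmaps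
    trivial trivial

theorem eq_mul_add_of_deriv_eq_const {𝕜 : Type*} [RCLike 𝕜] {f : 𝕜 → 𝕜} {c : 𝕜}
    (hf : Differentiable 𝕜 f) (hc : ∀ x, deriv f x = c) (x : 𝕜) : f x = c * x + f 0 := by
  have hderiv : ∀ y, HasDerivAt (fun x => f x - c * x) (c - c * 1) y := fun y =>
    (hc y ▸ (hf y).hasDerivAt).sub ((hasDerivAt_id' y).const_mul c)
  linear_combination is_const_of_deriv_eq_zero (fun y => (hderiv y).differentiableAt)
    (fun y => by rw [(hderiv y).deriv, mul_one, sub_self]) x 0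

theorem exists_eq_mul_add_of_sq_deriv_constant {f : ℝ → ℝ} (hf : ContDiff ℝ 1 f)
    (hsq : ∀ x y, deriv f x ^ 2 = deriv f y ^ 2) : ∃ a b, ∀ x, f x = a * x + b :=
  ⟨deriv f 0, f 0, eq_mul_add_of_deriv_eq_const (hf.differentiable one_ne_zero) fun x =>
    PreconnectedSpace.constant_of_sq_constant (hf.continuous_deriv le_rfl) hsq x 0⟩

/-- Theorem 2: a translation minimal surface (u, v, g(u) + h(v)) in ℝ³ with
density e^z has g or h affine. -/
theorem translation_minimal_is_ruled
    (g h : ℝ → ℝ) (hg : ContDiff ℝ 2 g) (hh : ContDiff ℝ 2 h)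
    (heq : ∀ u v : ℝ,
      deriv (deriv g) u * (1 + deriv h v ^ 2) + deriv (deriv h) v * (1 + deriv g u ^ 2) =
        1 + deriv g u ^ 2 + deriv h v ^ 2) :
    (∃ a b : ℝ, ∀ u, g u = a * u + b) ∨ (∃ c d : ℝ, ∀ v, h v = c * v + d) := by
  have hsep : ∀ u v, (1 - deriv (deriv g) u) * (1 + deriv h v ^ 2) +
      (1 + deriv g u ^ 2) * (1 - deriv (deriv h) v) = 1 := fun u v => by
    linear_combination -heq u v
  rcases const_or_const_of_mul_add_mul_eq_one hsep with hP | hQ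
  · exact Or.inl <| exists_eq_mul_add_of_sq_deriv_constant (hg.of_le one_le_two)
      fun u u' => by linarith [(hP u u').2]
  · exact Or.inr <| exists_eq_mul_add_of_sq_deriv_constant (hh.of_le one_le_two)
      fun v v' => by linarith [(hQ v v').1]
end

section
/- Let c, D ∈ ℝ and let I ⊆ ℝ be an open interval on which cos((u + D)/√(1 + c²)) ≠ 0. Define g : I → ℝ by g(u) = −(1 + c²)·log|cos((u + D)/√(1 + c²))|. Then g''(u)·(1 + c²) = 1 + c² + g'(u)² for all u ∈ I; equivalently, with h(v) = c·v + d for any d ∈ ℝ, one has g''(u)·(1 + h'(v)²) + h''(v)·(1 + g'(u)²) = 1 + g'(u)² + h'(v)² for all u ∈ I and all v ∈ ℝ. -/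
/-!
Writing `k = √(1 + c²)` and `θ = (u + D) / k`, one computes `g' = k tan θ` and
`g'' = 1 / cos² θ`, so `g'' k² = k² (1 + tan² θ) = k² + g'²`. Since `h` is affine, `h' = c`
and `h'' = 0`, and the translation-surface equation reduces to this ODE.
-/

open Real

section LogCos

theorem hasDerivAt_add_const_div (k D u : ℝ) :
    HasDerivAt (fun x => (x + D) / k) (1 / k) u := by
  simpa using ((hasDerivAt_id u).add_const D).div_const k

variable {k D u : ℝ}

theorem hasDerivAt_neg_sq_mul_log_abs_cos_div (hk : k ≠ 0) (hcos : cos ((u + D) / k) ≠ 0) :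
    HasDerivAt (fun x => -k ^ 2 * log |cos ((x + D) / k)|) (k * tan ((u + D) / k)) u := by
  have hlog :=
    (((hasDerivAt_cos _).comp u (hasDerivAt_add_const_div k D u)).log hcos).const_mul (-k ^ 2)
  simp only [log_abs]
  refine hlog.congr_deriv ?_
  rw [tan_eq_sin_div_cos, Function.comp_apply]
  field_simp

theorem hasDerivAt_mul_tan_div (hk : k ≠ 0) (hcos : cos ((u + D) / k) ≠ 0) :
    HasDerivAt (fun x => k * tan ((x + D) / k)) (1 / cos ((u + D) / k) ^ 2) u := by
  refine (((hasDerivAt_tan hcos).comp u (hasDerivAt_add_const_div k D u)).const_mul k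
    ).congr_deriv ?_
  field_simp

theorem deriv_deriv_mul_sq_eq_of_log_abs_cos {U : Set ℝ} (hU : IsOpen U) (hk : k ≠ 0)
    (hcos : ∀ x ∈ U, cos ((x + D) / k) ≠ 0) {g : ℝ → ℝ}
    (hg : ∀ x, g x = -k ^ 2 * log |cos ((x + D) / k)|) (hu : u ∈ U) :
    deriv (deriv g) u * k ^ 2 = k ^ 2 + deriv g u ^ 2 := by
  have hg' : g = fun x => -k ^ 2 * log |cos ((x + D) / k)| := funext hg
  have hdg : ∀ x ∈ U, deriv g x = k * tan ((x + D) / k) := fun x hx => by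
    rw [hg']; exact (hasDerivAt_neg_sq_mul_log_abs_cos_div hk (hcos x hx)).deriv
  have hddg : deriv (deriv g) u = 1 / cos ((u + D) / k) ^ 2 := by
    rw [(Filter.eventuallyEq_of_mem (hU.mem_nhds hu) hdg).deriv_eq]
    exact (hasDerivAt_mul_tan_div hk (hcos u hu)).deriv
  rw [hddg, hdg u hu, mul_pow, ← inv_one_add_tan_sq (hcos u hu)]
  field_simp

end LogCos

/-- The explicit Scherk-type translation minimal surface: the function
g(u) = -(1+c²)·log|cos((u+D)/√(1+c²))| satisfies the minimality ODE. -/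
theorem scherk_type_solution
    (c D d a b : ℝ)
    (hcos : ∀ u ∈ Set.Ioo a b, Real.cos ((u + D) / Real.sqrt (1 + c ^ 2)) ≠ 0)
    (g : ℝ → ℝ)
    (hg : ∀ u, g u = -(1 + c ^ 2) * Real.log |Real.cos ((u + D) / Real.sqrt (1 + c ^ 2))|)
    (h : ℝ → ℝ) (hh : ∀ v, h v = c * v + d) :
    (∀ u ∈ Set.Ioo a b,
      deriv (deriv g) u * (1 + c ^ 2) = 1 + c ^ 2 + deriv g u ^ 2) ∧
    (∀ u ∈ Set.Ioo a b, ∀ v : ℝ,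
      deriv (deriv g) u * (1 + deriv h v ^ 2) + deriv (deriv h) v * (1 + deriv g u ^ 2) =
        1 + deriv g u ^ 2 + deriv h v ^ 2) := by
  have hksq : √(1 + c ^ 2) ^ 2 = 1 + c ^ 2 := sq_sqrt (by positivity)
  have hk : √(1 + c ^ 2) ≠ 0 := by positivity
  have ode : ∀ u ∈ Set.Ioo a b,
      deriv (deriv g) u * (1 + c ^ 2) = 1 + c ^ 2 + deriv g u ^ 2 := by
    intro u hu
    rw [← hksq]
    exact deriv_deriv_mul_sq_eq_of_log_abs_cos isOpen_Ioo hk hcos (by rwa [hksq]) hu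
  have hdh : deriv h = fun _ => c := by
    rw [funext hh]
    funext v
    simp
  refine ⟨ode, fun u hu v => ?_⟩
  simp only [hdh, deriv_const', zero_mul, add_zero]
  linarith [ode u hu]
end
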